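/- arXiv:0801.1737 — 5 statements merged into one kernel-verified Lean document; each statement's English description precedes it below -/
import Mathlib

section
/- Let G = (V, E) be a finite simple graph and let B ≤ |V| be a natural number. Construct the directed network G' as follows: for every edge e = {a, b} ∈ E introduce a new vertex v_e, and add the two arcs (a, v_e) and (b, v_e), each with capacity 1; the vertices v_e are sinks with unit demand, and the maximum flow value ν^max(G') is defined as the maximum, over all functions f assigning to each arc a real value in [0, 1] such that the total inflow into each sink v_e is at most 1, of the total inflow into all sinks. For R ⊆ V, let G' ∖ R denote G' with all arcs leaving vertices of R removed. Then min { ν^max(G' ∖ R) : R ⊆ V, |R| ≤ B } = |E| − max { e(W) : W ⊆ V, |W| = B }, where e(W) denotes the number of edges of G with both endpoints in W. In particular, for |R| = B, R is an optimal interdiction set for budget B if and only if R is the vertex set of a B-densest subgraph of G. -/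
open scoped Classical

/-- The value of a maximum flow in the subdivision network `G'` of the simple graph `G`,
after removing all arcs leaving vertices of `R`.  The arcs of `G'` are the pairs `(a, e)`
where `a` is an endpoint of the edge `e`; each such arc has capacity `1`, goes from `a`
to the subdivision vertex `v_e`, and each subdivision vertex `v_e` is a sink that can
absorb at most one unit of flow.  The value of a flow is the total inflow into the sinks,
and `subdivMaxFlow G R` is the supremum of all flow values. -/
noncomputable def subdivMaxFlow {V : Type*} [Fintype V] [DecidableEq V]
    (G : SimpleGraph V) (R : Finset V) : ℝ :=
  sSup {x : ℝ | ∃ f : V → Sym2 V → ℝ,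
    ((∀ a e, 0 ≤ f a e ∧ f a e ≤ 1) ∧
     (∀ a e, (e ∉ G.edgeSet ∨ a ∉ e ∨ a ∈ R) → f a e = 0) ∧
     (∀ e ∈ G.edgeSet, (∑ a, f a e) ≤ 1)) ∧
    x = ∑ e : Sym2 V, ∑ a, f a e}

/-- `edgesInside G W` is the number `e(W)` of edges of `G` with both endpoints in `W`. -/
noncomputable def edgesInside {V : Type*} (G : SimpleGraph V) (W : Finset V) : ℕ :=
  {e : Sym2 V | e ∈ G.edgeSet ∧ ∀ a ∈ e, a ∈ W}.ncard

/-!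
Once the arcs leaving `R` are removed, the sink `v_e` can still be fed exactly when the edge `e`
has an endpoint outside `R`, and then one unit along an arc from such an endpoint saturates it.
Hence `ν^max(G' ∖ R) = |E| - e(R)`, and minimising over `|R| ≤ B` amounts to maximising `e(R)`,
which by monotonicity of `e` is attained at a set of size exactly `B`.
-/

lemma Set.sum_indicator_one_eq_ncard {α M : Type*} [Fintype α] [AddCommMonoidWithOne M]
    (S : Set α) : ∑ a, S.indicator (1 : α → M) a = S.ncard := by
  rw [Finset.sum_indicator_eq_sum_filter]
  simp [Set.ncard_eq_toFinset_card']

lemma Set.mem_sym2_iff_forall {α : Type*} {s : Set α} {z : Sym2 α} :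
    z ∈ s.sym2 ↔ ∀ a ∈ z, a ∈ s := by
  induction z using Sym2.inductionOn
  simp

section

variable {V : Type*} [Fintype V] {G : SimpleGraph V}

lemma edgesInside_mono {W W' : Finset V} (h : W ⊆ W') : edgesInside G W ≤ edgesInside G W' :=
  Set.ncard_le_ncard (fun _ ⟨he, hW⟩ => ⟨he, fun a ha => h (hW a ha)⟩) (Set.toFinite _)

lemma edgesInside_le_sup_card_eq {B : ℕ} (hB : B ≤ Fintype.card V) {R : Finset V}
    (hR : R.card ≤ B) :
    edgesInside G R ≤
      (Finset.univ.filter fun W : Finset V => W.card = B).sup fun W => edgesInside G W := by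
  obtain ⟨W, hRW, hW⟩ := Finset.exists_superset_card_eq hR hB
  exact (edgesInside_mono hRW).trans (Finset.le_sup (by simpa using hW))

lemma exists_card_eq_edgesInside_eq_sup {B : ℕ} (hB : B ≤ Fintype.card V) :
    ∃ W : Finset V, W.card = B ∧ edgesInside G W =
      (Finset.univ.filter fun W : Finset V => W.card = B).sup fun W => edgesInside G W := by
  obtain ⟨W, -, hW⟩ := Finset.exists_subset_card_eq (s := Finset.univ) (by simpa using hB)
  obtain ⟨W, hWmem, hWsup⟩ := Finset.exists_mem_eq_sup
    (Finset.univ.filter fun W : Finset V => W.card = B) ⟨W, by simpa using hW⟩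
    fun W : Finset V => edgesInside G W
  exact ⟨W, by simpa using hWmem, hWsup.symm⟩

variable (G) (R : Finset V)

def IsSubdivFlow (f : V → Sym2 V → ℝ) : Prop :=
  (∀ a e, 0 ≤ f a e ∧ f a e ≤ 1) ∧
  (∀ a e, (e ∉ G.edgeSet ∨ a ∉ e ∨ a ∈ R) → f a e = 0) ∧
  (∀ e ∈ G.edgeSet, (∑ a, f a e) ≤ 1)

variable {G R}

lemma IsSubdivFlow.sum_le_indicator {f : V → Sym2 V → ℝ} (hf : IsSubdivFlow G R f)
    (e : Sym2 V) : ∑ a, f a e ≤ (G.edgeSet \ (R : Set V).sym2).indicator 1 e := by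
  obtain ⟨-, hzero, hcap⟩ := hf
  by_cases he : e ∈ G.edgeSet \ (R : Set V).sym2
  · rw [Set.indicator_of_mem he]
    exact hcap e he.1
  · rw [Set.indicator_of_notMem he, Finset.sum_eq_zero]
    exact fun a _ => hzero a e (by grind [Set.mem_sym2_iff_forall])

lemma IsSubdivFlow.value_le {f : V → Sym2 V → ℝ} (hf : IsSubdivFlow G R f) :
    ∑ e, ∑ a, f a e ≤ (G.edgeSet \ (R : Set V).sym2).ncard :=
  calc ∑ e, ∑ a, f a e ≤ ∑ e, (G.edgeSet \ (R : Set V).sym2).indicator 1 e :=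
        Finset.sum_le_sum fun e _ => hf.sum_le_indicator e
    _ = _ := Set.sum_indicator_one_eq_ncard _

lemma exists_isSubdivFlow_value_eq : ∃ f, IsSubdivFlow G R f ∧
    ∑ e, ∑ a, f a e = (G.edgeSet \ (R : Set V).sym2).ncard := by
  set S := G.edgeSet \ (R : Set V).sym2
  have hout : ∀ e ∈ S, ∃ a ∈ e, a ∉ R := fun e he => by grind [Set.mem_sym2_iff_forall]
  choose t htmem htR using hout
  let f : V → Sym2 V → ℝ := fun a e => if h : e ∈ S then (if a = t e h then 1 else 0) else 0
  have hsum : ∀ e, ∑ a, f a e = S.indicator 1 e := by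
    intro e
    by_cases he : e ∈ S <;> simp [f, he]
  refine ⟨f, ⟨fun a e => ?_, fun a e hae => ?_, fun e _ => ?_⟩, ?_⟩
  · simp only [f]
    split_ifs <;> norm_num
  · simp only [f]
    split_ifs with he ha
    · exact absurd hae (by grind)
    all_goals rfl
  · exact (hsum e).le.trans (Set.indicator_apply_le' (fun _ => le_rfl) (fun _ => zero_le_one))
  · simp only [hsum, Set.sum_indicator_one_eq_ncard]

lemma edgesInside_add_ncard_diff :
    edgesInside G R + (G.edgeSet \ (R : Set V).sym2).ncard = G.edgeSet.ncard := by
  have hinside : edgesInside G R = (G.edgeSet ∩ (R : Set V).sym2).ncard := by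
    unfold edgesInside
    congr 1
    ext e
    simp [Set.mem_sym2_iff_forall]
  rw [hinside, Set.ncard_inter_add_ncard_sdiff_eq_ncard]

theorem subdivMaxFlow_eq [DecidableEq V] :
    subdivMaxFlow G R = G.edgeSet.ncard - edgesInside G R := by
  have hsplit : (G.edgeSet.ncard : ℝ) - edgesInside G R =
      (G.edgeSet \ (R : Set V).sym2).ncard := by
    rw [← edgesInside_add_ncard_diff]
    push_cast
    ring
  rw [hsplit]
  obtain ⟨f, hf, hval⟩ := exists_isSubdivFlow_value_eq (G := G) (R := R)
  refine IsGreatest.csSup_eq ⟨⟨f, hf, hval.symm⟩, ?_⟩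
  rintro _ ⟨f, hf, rfl⟩
  exact IsSubdivFlow.value_le hf

end

/-- Interdicting the subdivision network of a graph `G` with vertex-removal budget `B`
is the `B`-densest-subgraph problem: the minimum over all `R ⊆ V` with `|R| ≤ B` of the
maximum flow in `G' ∖ R` equals `|E| - max {e(W) : |W| = B}`; moreover a set `R` with
`|R| = B` is an optimal interdiction set iff it is the vertex set of a `B`-densest
subgraph of `G`. -/
theorem statement0 {V : Type*} [Fintype V] [DecidableEq V] (G : SimpleGraph V)
    (B : ℕ) (hB : B ≤ Fintype.card V) :
    IsLeast {x : ℝ | ∃ R : Finset V, R.card ≤ B ∧ x = subdivMaxFlow G R}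
      ((G.edgeSet.ncard : ℝ) -
        (((Finset.univ.filter fun W : Finset V => W.card = B).sup
          fun W => edgesInside G W : ℕ) : ℝ)) ∧
    ∀ R : Finset V, R.card = B →
      (subdivMaxFlow G R =
          (G.edgeSet.ncard : ℝ) -
            (((Finset.univ.filter fun W : Finset V => W.card = B).sup
              fun W => edgesInside G W : ℕ) : ℝ) ↔
        edgesInside G R =
          (Finset.univ.filter fun W : Finset V => W.card = B).sup
            fun W => edgesInside G W) := by
  obtain ⟨W, hW, hWsup⟩ := exists_card_eq_edgesInside_eq_sup (G := G) hB
  simp only [subdivMaxFlow_eq]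
  refine ⟨⟨⟨W, hW.le, by rw [hWsup]⟩, ?_⟩, fun R _ => ?_⟩
  · rintro _ ⟨R, hR, rfl⟩
    exact sub_le_sub_left (Nat.cast_le.2 (edgesInside_le_sup_card_eq hB hR)) _
  · rw [sub_right_inj, Nat.cast_inj]
end

section
/- Let G = (V, E) be a finite directed graph with lower and upper arc capacities l, u : E → ℕ satisfying l(e) ≤ u(e) for all e, with disjoint source and sink sets S, T ⊆ V and a demand/supply function d : V → ℤ satisfying d(s) < 0 for s ∈ S, d(t) > 0 for t ∈ T, d(v) = 0 otherwise, and −d(S) = d(T). Let T' be an undirected tree whose vertex set is contained in V and contains S ∪ T, whose edges are new (not in E). For each edge {v, w} of T', let V_{T'}(v, w) be the set of vertices connected to v in T' after deleting the edge {v, w}; orient the edge from v to w if d(V_{T'}(v, w)) ≥ 0 and from w to v otherwise, and give the resulting arc lower and upper capacity both equal to |d(V_{T'}(v, w))| (i.e., equal to d(V_{T'}(v, w)) for the chosen orientation, which is nonnegative). Let Ĝ be the directed graph with arc set E together with these oriented tree arcs and the extended capacity bounds. Then G admits a saturating flow if and only if Ĝ admits a circulation. -/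
open scoped Classical

/-- Net outflow of the function `f` at the vertex `v` in the directed graph whose arcs
are the elements of `E`, with tails `esrc` and heads `edst`. -/
noncomputable def netOutflow {V E : Type*} [Fintype E] (esrc edst : E → V)
    (f : E → ℝ) (v : V) : ℝ :=
  (∑ e ∈ Finset.univ.filter (fun e => esrc e = v), f e) -
    ∑ e ∈ Finset.univ.filter (fun e => edst e = v), f e

/-- A saturating flow: the flow respects the lower and upper capacities and every vertex
`v` has net outflow `-d v`; i.e. flow is conserved at vertices with `d v = 0`, every
source `s` (with `d s < 0`) has net outflow `-d s`, and every sink `t` (with `d t > 0`)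
has net inflow `d t`. -/
def IsSaturatingFlow {V E : Type*} [Fintype E] (esrc edst : E → V)
    (l u : E → ℕ) (d : V → ℤ) (f : E → ℝ) : Prop :=
  (∀ e, (l e : ℝ) ≤ f e ∧ f e ≤ (u e : ℝ)) ∧
  ∀ v, netOutflow esrc edst f v = -(d v : ℝ)

/-- A circulation: the flow respects the lower and upper bounds and is conserved at
every vertex. -/
def IsCirculation {V E : Type*} [Fintype E] (esrc edst : E → V)
    (lo hi : E → ℤ) (g : E → ℝ) : Prop :=
  (∀ e, (lo e : ℝ) ≤ g e ∧ g e ≤ (hi e : ℝ)) ∧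
  ∀ v, netOutflow esrc edst g v = 0

/-- `treeSide Tr d v w` is `d(V_{T'}(v, w))`: the sum of the demands over the set of
vertices that remain connected to `v` in the tree `Tr` after deleting the edge `{v, w}`. -/
noncomputable def treeSide {V : Type*} [Fintype V] (Tr : SimpleGraph V) (d : V → ℤ)
    (v w : V) : ℤ :=
  ∑ x ∈ Finset.univ.filter
      (fun x => (Tr.deleteEdges {Sym2.mk v w}).Reachable v x), d x

/-- The arcs obtained by orienting the edges of the tree `Tr`: the edge `{v, w}` is
oriented from `v` to `w` if `d(V_{T'}(v, w)) ≥ 0` and from `w` to `v` otherwise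
(breaking ties, when `d(V_{T'}(v, w)) = 0`, by the linear order on `V`). -/
def TreeArc {V : Type*} [Fintype V] [LinearOrder V] (Tr : SimpleGraph V) (d : V → ℤ) :
    Type _ :=
  {q : V × V // Tr.Adj q.1 q.2 ∧ 0 ≤ treeSide Tr d q.1 q.2 ∧
    (treeSide Tr d q.1 q.2 = 0 → q.1 ≤ q.2)}

noncomputable instance {V : Type*} [Fintype V] [LinearOrder V] (Tr : SimpleGraph V)
    (d : V → ℤ) : Fintype (TreeArc Tr d) := by
  unfold TreeArc; infer_instance

/-!
Orient each tree edge as in `TreeArc` and let it carry the fixed flow `φ(v, w) = d(V_{T'}(v, w))`.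
This tree flow has net outflow `d v` at every vertex `v`: the component of `v` has total demand
`0` (it contains all terminals, or none), and deleting `v` splits it into `{v}` and the branches
`V_{T'}(w, v)` at its neighbours `w`, each of demand `-φ(v, w)`. Adding the tree flow to a
saturating flow therefore gives a circulation of `Ĝ`; conversely a circulation of `Ĝ` carries
exactly `φ` on the tree arcs, and what is left on `E` is a saturating flow.
-/

open Finset

namespace SimpleGraph

variable {V : Type*} {G : SimpleGraph V}

theorem Reachable.deleteEdges_singleton_or {a x : V} (v w : V) (h : G.Reachable a x) :
    (G.deleteEdges {s(v, w)}).Reachable a x ∨ (G.deleteEdges {s(v, w)}).Reachable v x ∨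
      (G.deleteEdges {s(v, w)}).Reachable w x := by
  obtain ⟨p⟩ := h
  induction p with
  | nil => exact Or.inl .rfl
  | @cons a b x hab _ ih =>
    rcases ih with hb | hvx | hwx
    · by_cases he : s(a, b) = s(v, w)
      · rcases Sym2.eq_iff.mp he with ⟨rfl, rfl⟩ | ⟨rfl, rfl⟩
        exacts [.inr (.inr hb), .inr (.inl hb)]
      · exact .inl ((Adj.reachable (by simpa [hab] using he)).trans hb)
    · exact .inr (.inl hvx)
    · exact .inr (.inr hwx)

theorem IsAcyclic.not_reachable_deleteEdges (hG : G.IsAcyclic) {v w : V} (h : G.Adj v w) :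
    ¬ (G.deleteEdges {s(v, w)}).Reachable v w :=
  isBridge_iff.mp (isAcyclic_iff_forall_adj_isBridge.mp hG h)

variable [Fintype V]

noncomputable def edgeSide (G : SimpleGraph V) (v w : V) : Finset V :=
  univ.filter ((G.deleteEdges {s(v, w)}).Reachable v)

theorem edgeSide_union_edgeSide {v w : V} (h : G.Adj v w) :
    G.edgeSide v w ∪ G.edgeSide w v = univ.filter (G.Reachable v) := by
  ext x
  simp only [edgeSide, Sym2.eq_swap (a := w), mem_union, mem_filter, mem_univ, true_and]
  refine ⟨?_, fun hx => (hx.deleteEdges_singleton_or v w).elim .inl id⟩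
  rintro (hx | hx)
  · exact hx.mono (deleteEdges_le _)
  · exact h.reachable.trans (hx.mono (deleteEdges_le _))

theorem IsAcyclic.disjoint_edgeSide (hG : G.IsAcyclic) {v w : V} (h : G.Adj v w) :
    Disjoint (G.edgeSide v w) (G.edgeSide w v) := by
  simp only [edgeSide, Sym2.eq_swap (a := w)]
  exact disjoint_filter.mpr fun x _ hv hw => hG.not_reachable_deleteEdges h (hv.trans hw.symm)

theorem IsAcyclic.exists_isPath_snd_eq (hG : G.IsAcyclic) {v w x : V} (h : G.Adj v w)
    (hx : x ∈ G.edgeSide w v) : ∃ p : G.Walk v x, p.IsPath ∧ p.snd = w := by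
  obtain ⟨q, hq⟩ := (mem_filter.mp hx).2.some.toPath
  have hvq : v ∉ q.support := fun hv =>
    hG.not_reachable_deleteEdges h.symm ⟨q.takeUntil v hv⟩
  refine ⟨.cons h (q.mapLe (deleteEdges_le _)), (hq.mapLe _).cons ?_, Walk.snd_cons _ _⟩
  simpa using hvq

theorem IsAcyclic.pairwiseDisjoint_edgeSide (hG : G.IsAcyclic) (v : V) :
    (univ.filter (G.Adj v) : Set V).PairwiseDisjoint (G.edgeSide · v) := by
  intro a ha b hb hab
  simp only [coe_filter, mem_univ, true_and, Set.mem_ofPred_eq] at ha hb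
  rw [Function.onFun, Finset.disjoint_left]
  intro x hxa hxb
  apply hab
  obtain ⟨p, hp, rfl⟩ := hG.exists_isPath_snd_eq ha hxa
  obtain ⟨p', hp', rfl⟩ := hG.exists_isPath_snd_eq hb hxb
  obtain rfl : p = p' := congrArg Subtype.val ((hG.subsingleton_path v x).elim ⟨p, hp⟩ ⟨p', hp'⟩)
  rfl

theorem IsAcyclic.biUnion_edgeSide (hG : G.IsAcyclic) (v : V) :
    (univ.filter (G.Adj v)).biUnion (G.edgeSide · v) = (univ.filter (G.Reachable v)).erase v := by
  ext x
  simp only [edgeSide, mem_biUnion, mem_erase, mem_filter, mem_univ, true_and]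
  constructor
  · rintro ⟨w, hw, hx⟩
    refine ⟨?_, hw.reachable.trans (hx.mono (deleteEdges_le _))⟩
    rintro rfl
    exact hG.not_reachable_deleteEdges hw (Sym2.eq_swap ▸ hx.symm)
  · rintro ⟨hxv, hr⟩
    obtain ⟨p, hp⟩ := hr.some.toPath
    cases p with
    | nil => exact absurd rfl hxv
    | @cons _ b _ hb q =>
      rw [Walk.cons_isPath_iff] at hp
      refine ⟨b, hb, ⟨q.toDeleteEdges _ fun e he he' => hp.2 ?_⟩⟩
      rw [Set.mem_singleton_iff] at he'
      exact q.fst_mem_support_of_mem_edges (Sym2.eq_swap ▸ he' ▸ he)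

end SimpleGraph

section Demands

variable {V : Type*} [Fintype V] {G : SimpleGraph V} (d : V → ℤ)

variable (G) in
def BalancedOnComponents : Prop :=
  ∀ v, ∑ x ∈ univ.filter (G.Reachable v), d x = 0

theorem balancedOnComponents_of_reachable_terminals {S T : Finset V} (hST : Disjoint S T)
    (hd0 : ∀ v, v ∉ S → v ∉ T → d v = 0) (hbal : -(∑ s ∈ S, d s) = ∑ t ∈ T, d t)
    (hconn : ∀ a ∈ (↑S ∪ ↑T : Set V), ∀ b ∈ (↑S ∪ ↑T : Set V), G.Reachable a b) :
    BalancedOnComponents G d := by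
  intro v
  have hd0' : ∀ x ∉ S ∪ T, d x = 0 := fun x hx =>
    hd0 x (fun h => hx (mem_union_left _ h)) (fun h => hx (mem_union_right _ h))
  by_cases h : ∃ y ∈ S ∪ T, G.Reachable v y
  · obtain ⟨y, hy, hvy⟩ := h
    have hsub : S ∪ T ⊆ univ.filter (G.Reachable v) := fun z hz =>
      mem_filter.mpr ⟨mem_univ z, hvy.trans (hconn y (by simpa using hy) z (by simpa using hz))⟩
    rw [← sum_subset hsub fun x _ hx => hd0' x hx, sum_union hST]
    linarith
  · push Not at h
    exact sum_eq_zero fun x hx => hd0' x fun hxST => h x hxST (mem_filter.mp hx).2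

variable {d}

theorem SimpleGraph.IsAcyclic.treeSide_swap (hG : G.IsAcyclic)
    (hd : BalancedOnComponents G d) {v w : V} (h : G.Adj v w) :
    treeSide G d w v = -treeSide G d v w := by
  have hsplit := sum_union (f := d) (hG.disjoint_edgeSide h)
  rw [SimpleGraph.edgeSide_union_edgeSide h, hd v] at hsplit
  change ∑ x ∈ G.edgeSide w v, d x = -∑ x ∈ G.edgeSide v w, d x
  linarith

theorem SimpleGraph.IsAcyclic.sum_treeSide_adj (hG : G.IsAcyclic)
    (hd : BalancedOnComponents G d) (v : V) :
    ∑ w ∈ univ.filter (G.Adj v), treeSide G d v w = d v := by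
  have hpart := sum_biUnion (f := d) (hG.pairwiseDisjoint_edgeSide v)
  rw [hG.biUnion_edgeSide, sum_erase_eq_sub (mem_filter.mpr ⟨mem_univ v, .rfl⟩), hd v] at hpart
  calc ∑ w ∈ univ.filter (G.Adj v), treeSide G d v w
      = ∑ w ∈ univ.filter (G.Adj v), -treeSide G d w v :=
        sum_congr rfl fun w hw => by
          rw [hG.treeSide_swap hd (mem_filter.mp hw).2.symm]
    _ = d v := by
      rw [sum_neg_distrib]
      change -∑ w ∈ univ.filter (G.Adj v), ∑ x ∈ G.edgeSide w v, d x = d v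
      linarith

end Demands

section TreeArcs

variable {V : Type*} [Fintype V] [LinearOrder V] {G : SimpleGraph V} {d : V → ℤ}

variable (G d) in
def IsTreeArc (a b : V) : Prop :=
  G.Adj a b ∧ 0 ≤ treeSide G d a b ∧ (treeSide G d a b = 0 → a ≤ b)

theorem isTreeArc_swap_iff {v w : V} (h : G.Adj v w)
    (hswap : treeSide G d w v = -treeSide G d v w) :
    IsTreeArc G d w v ↔ ¬ IsTreeArc G d v w := by
  simp only [IsTreeArc, hswap, h, h.symm, true_and, neg_nonneg, neg_eq_zero, not_and]
  rcases lt_trichotomy (treeSide G d v w) 0 with hs | hs | hs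
  · simp [hs.le, hs.ne, hs]
  · simp [hs, h.ne.le_iff_lt]
  · simp [hs, hs.ne', hs.le]

theorem netOutflow_treeArc (f : V → V → ℝ) (v : V) :
    netOutflow (fun q : TreeArc G d => q.val.1) (fun q => q.val.2)
        (fun q => f q.val.1 q.val.2) v =
      ∑ w ∈ univ.filter (IsTreeArc G d v), f v w -
        ∑ w ∈ univ.filter (fun w => IsTreeArc G d w v), f w v := by
  unfold netOutflow
  congr 1
  · refine sum_nbij (fun q => q.val.2) ?_ ?_ ?_ ?_
    · simp only [mem_filter, mem_univ, true_and]
      rintro ⟨⟨a, b⟩, hab⟩ rfl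
      exact hab
    · simp only [coe_filter, mem_univ, true_and]
      rintro ⟨⟨a, b⟩, _⟩ rfl ⟨⟨a', b'⟩, _⟩ rfl (rfl : b = b')
      rfl
    · simp only [coe_filter, mem_univ, true_and]
      intro w hw
      exact ⟨⟨(v, w), hw⟩, rfl, rfl⟩
    · simp only [mem_filter, mem_univ, true_and]
      rintro ⟨⟨a, b⟩, _⟩ rfl
      rfl
  · refine sum_nbij (fun q => q.val.1) ?_ ?_ ?_ ?_
    · simp only [mem_filter, mem_univ, true_and]
      rintro ⟨⟨a, b⟩, hab⟩ rfl
      exact hab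
    · simp only [coe_filter, mem_univ, true_and]
      rintro ⟨⟨a, b⟩, _⟩ rfl ⟨⟨a', b'⟩, _⟩ rfl (rfl : a = a')
      rfl
    · simp only [coe_filter, mem_univ, true_and]
      intro w hw
      exact ⟨⟨(w, v), hw⟩, rfl, rfl⟩
    · simp only [mem_filter, mem_univ, true_and]
      rintro ⟨⟨a, b⟩, _⟩ rfl
      rfl

theorem SimpleGraph.IsAcyclic.netOutflow_treeArc_treeSide (hG : G.IsAcyclic)
    (hd : BalancedOnComponents G d) (v : V) :
    netOutflow (fun q : TreeArc G d => q.val.1) (fun q => q.val.2)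
      (fun q => (treeSide G d q.val.1 q.val.2 : ℝ)) v = d v := by
  let N := univ.filter (G.Adj v)
  have hout : univ.filter (IsTreeArc G d v) = N.filter (IsTreeArc G d v) := by
    ext w
    simp only [N, mem_filter, mem_univ, true_and, IsTreeArc]
    tauto
  have hin : ∑ w ∈ univ.filter (fun w => IsTreeArc G d w v), (treeSide G d w v : ℝ) =
      ∑ w ∈ N.filter (fun w => ¬ IsTreeArc G d v w), -(treeSide G d v w : ℝ) := by
    refine sum_congr ?_ fun w hw => ?_
    · ext w
      simp only [N, mem_filter, mem_univ, true_and]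
      exact ⟨fun hw => ⟨hw.1.symm, (isTreeArc_swap_iff hw.1.symm
        (hG.treeSide_swap hd hw.1.symm)).mp hw⟩, fun hw => (isTreeArc_swap_iff hw.1
        (hG.treeSide_swap hd hw.1)).mpr hw.2⟩
    · have hvw : G.Adj v w := (mem_filter.mp (mem_filter.mp hw).1).2
      rw [hG.treeSide_swap hd hvw, Int.cast_neg]
  rw [netOutflow_treeArc (fun a b => (treeSide G d a b : ℝ)), hin, hout, sum_neg_distrib,
    sub_neg_eq_add, sum_filter_add_sum_filter_not]
  exact_mod_cast hG.sum_treeSide_adj hd v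

end TreeArcs

theorem netOutflow_sumElim {V E F : Type*} [Fintype E] [Fintype F]
    (src₁ dst₁ : E → V) (src₂ dst₂ : F → V) (g : E ⊕ F → ℝ) (v : V) :
    netOutflow (Sum.elim src₁ src₂) (Sum.elim dst₁ dst₂) g v =
      netOutflow src₁ dst₁ (g ∘ Sum.inl) v + netOutflow src₂ dst₂ (g ∘ Sum.inr) v := by
  simp only [netOutflow, sum_filter, Fintype.sum_sum_type, Sum.elim_inl, Sum.elim_inr,
    Function.comp_apply]
  exact add_sub_add_comm ..

theorem exists_isSaturatingFlow_iff_exists_isCirculation_sumElim {V E F : Type*} [Fintype E]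
    [Fintype F] (esrc edst : E → V) (fsrc fdst : F → V) (l u : E → ℕ) (d : V → ℤ) (φ : F → ℤ)
    (hφ : ∀ v, netOutflow fsrc fdst (fun q => (φ q : ℝ)) v = d v) :
    (∃ f : E → ℝ, IsSaturatingFlow esrc edst l u d f) ↔
      ∃ g : E ⊕ F → ℝ, IsCirculation (Sum.elim esrc fsrc) (Sum.elim edst fdst)
        (Sum.elim (fun e => (l e : ℤ)) φ) (Sum.elim (fun e => (u e : ℤ)) φ) g := by
  constructor
  · rintro ⟨f, hbd, hcons⟩
    refine ⟨Sum.elim f (fun q => (φ q : ℝ)), ?_, fun v => ?_⟩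
    · rintro (e | q)
      · exact_mod_cast hbd e
      · exact ⟨le_rfl, le_rfl⟩
    · rw [netOutflow_sumElim, Sum.elim_comp_inl, Sum.elim_comp_inr, hcons, hφ]
      ring
  · rintro ⟨g, hbd, hcons⟩
    have hfixed : g ∘ Sum.inr = fun q => (φ q : ℝ) :=
      funext fun q => le_antisymm (hbd (.inr q)).2 (hbd (.inr q)).1
    refine ⟨g ∘ Sum.inl, fun e => by exact_mod_cast hbd (.inl e), fun v => ?_⟩
    have h := hcons v
    rw [netOutflow_sumElim, hfixed, hφ] at h
    linarith

theorem statement2_general {V E : Type*} [Fintype V] [LinearOrder V] [Fintype E]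
    (esrc edst : E → V) (l u : E → ℕ)
    (S T : Finset V) (hST : Disjoint S T) (d : V → ℤ)
    (hd0 : ∀ v, v ∉ S → v ∉ T → d v = 0)
    (hbal : -(∑ s ∈ S, d s) = ∑ t ∈ T, d t)
    (Tr : SimpleGraph V) (hacyc : Tr.IsAcyclic)
    (hconn : ∀ a ∈ Tr.support ∪ ↑S ∪ ↑T, ∀ b ∈ Tr.support ∪ ↑S ∪ ↑T, Tr.Reachable a b) :
    (∃ f : E → ℝ, IsSaturatingFlow esrc edst l u d f) ↔
    (∃ g : (E ⊕ TreeArc Tr d) → ℝ,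
      IsCirculation
        (Sum.elim esrc (fun q => q.val.1))
        (Sum.elim edst (fun q => q.val.2))
        (Sum.elim (fun e => (l e : ℤ)) (fun q => treeSide Tr d q.val.1 q.val.2))
        (Sum.elim (fun e => (u e : ℤ)) (fun q => treeSide Tr d q.val.1 q.val.2))
        g) := by
  have hterminals : ↑S ∪ ↑T ⊆ Tr.support ∪ ↑S ∪ ↑T := by
    rw [Set.union_assoc]
    exact Set.subset_union_right
  have hd : BalancedOnComponents Tr d := balancedOnComponents_of_reachable_terminals d hST hd0 hbal
    fun a ha b hb => hconn a (hterminals ha) b (hterminals hb)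
  exact exists_isSaturatingFlow_iff_exists_isCirculation_sumElim _ _ _ _ l u d _
    (hacyc.netOutflow_treeArc_treeSide hd)

/-- Miller–Naor reduction: a flow network `G` with multiple sources `S` and sinks `T`,
balanced demands `d`, and an (added, planarity-preserving) tree `Tr` spanning `S ∪ T`
admits a saturating flow if and only if the circulation network `Ĝ`, obtained from `G`
by adding the oriented tree arcs with lower bound equal to upper bound equal to
`d(V_{T'}(v, w))`, admits a circulation. -/
theorem statement2 {V E : Type*} [Fintype V] [LinearOrder V] [Fintype E]
    (esrc edst : E → V) (l u : E → ℕ) (hlu : ∀ e, l e ≤ u e)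
    (S T : Finset V) (hST : Disjoint S T) (d : V → ℤ)
    (hdS : ∀ s ∈ S, d s < 0) (hdT : ∀ t ∈ T, 0 < d t)
    (hd0 : ∀ v, v ∉ S → v ∉ T → d v = 0)
    (hbal : -(∑ s ∈ S, d s) = ∑ t ∈ T, d t)
    (Tr : SimpleGraph V) (hacyc : Tr.IsAcyclic)
    (hconn : ∀ a ∈ Tr.support ∪ ↑S ∪ ↑T, ∀ b ∈ Tr.support ∪ ↑S ∪ ↑T, Tr.Reachable a b)
    (hnew : ∀ e : E, ¬ Tr.Adj (esrc e) (edst e)) :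
    (∃ f : E → ℝ, IsSaturatingFlow esrc edst l u d f) ↔
    (∃ g : (E ⊕ TreeArc Tr d) → ℝ,
      IsCirculation
        (Sum.elim esrc (fun q => q.val.1))
        (Sum.elim edst (fun q => q.val.2))
        (Sum.elim (fun e => (l e : ℤ)) (fun q => treeSide Tr d q.val.1 q.val.2))
        (Sum.elim (fun e => (u e : ℤ)) (fun q => treeSide Tr d q.val.1 q.val.2))
        g) :=
  statement2_general esrc edst l u S T hST d hd0 hbal Tr hacyc hconn
end

section
/- Let G = (V, E, u, s, t) be a finite directed flow network with integral capacities u, a single source s and a single sink t, and let R ⊆ E. Let [V_R, V ∖ V_R] be a minimum s-t cut of G ∖ R (the network with the arcs of R removed). Then (i) ν^max(G ∖ R) = Σ_{e ∈ ω⁺(V_R) ∖ R} u(e) = ν([V_R, V ∖ V_R]) − Σ_{e ∈ R ∩ ω⁺(V_R)} u(e), where ν([V_R, V ∖ V_R]) is the value of the cut in G; and (ii) ν^max(G ∖ (R ∩ ω⁺(V_R))) = ν^max(G ∖ R). In particular, removing only the arcs of R that lie in the cut ω⁺(V_R) decreases the maximum flow by the same amount as removing all of R, so every minimal optimal interdiction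 set R satisfies R ⊆ ω⁺(V_R). -/
/-!
Part (i) is the max-flow min-cut theorem for `G ∖ R`. Integral flows are increased one unit at
a time along walks in the residual network; once `t` is unreachable, the set reached from `s` is a
cut that the flow saturates, so the flow value is a cut capacity and hence at least the minimum
cut, while every flow value is at most every cut capacity.

The capacity of `[V_R, V ∖ V_R]` in `G ∖ R'` only sees `R' ∩ ω⁺(V_R)`, and shrinking `R` to
`R' ⊇ R ∩ ω⁺(V_R)` can only enlarge the other cut capacities. So `V_R` remains a minimum cut of
`G ∖ R'` with the same capacity, which gives (ii) and the statement on minimal interdiction sets.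
-/

open scoped Classical

/-- An `s`-`t` flow in the network `G ∖ R`, i.e. a flow vanishing on the removed arcs
`R`: capacities are respected, flow is conserved away from `s` and `t`, and the net
outflow at `s` is nonnegative. -/
def IsFlowWithout {V E : Type*} [Fintype E] (esrc edst : E → V) (u : E → ℕ)
    (s t : V) (R : Set E) (f : E → ℝ) : Prop :=
  (∀ e, 0 ≤ f e ∧ f e ≤ (u e : ℝ)) ∧ (∀ e ∈ R, f e = 0) ∧
  (∀ v, v ≠ s → v ≠ t → netOutflow esrc edst f v = 0) ∧
  0 ≤ netOutflow esrc edst f s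

/-- `ν^max(G ∖ R)`: the supremum of the values of `s`-`t` flows in `G ∖ R`. -/
noncomputable def maxFlowWithout {V E : Type*} [Fintype E] (esrc edst : E → V)
    (u : E → ℕ) (s t : V) (R : Set E) : ℝ :=
  sSup {x : ℝ | ∃ f, IsFlowWithout esrc edst u s t R f ∧ x = netOutflow esrc edst f s}

open Finset

section Walk

variable {V A : Type*} (tail head : A → V)

def IsWalk : V → V → List A → Prop
  | x, y, [] => x = y
  | x, y, a :: L => tail a = x ∧ IsWalk (head a) y L

variable {tail head}

theorem IsWalk.cons_of_append {a : A} {y : V} :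
    ∀ {x : V} {L₁ L₂ : List A}, IsWalk tail head x y (L₁ ++ a :: L₂) →
      IsWalk tail head (tail a) y (a :: L₂)
  | _, [], _, h => ⟨rfl, h.2⟩
  | _, _ :: _, _, h => cons_of_append h.2

theorem IsWalk.sum_map_sub {M : Type*} [AddCommGroup M] (φ : V → M) :
    ∀ {x y : V} {L : List A}, IsWalk tail head x y L →
      (L.map fun a => φ (tail a) - φ (head a)).sum = φ x - φ y
  | _, _, [], h => by simp [show _ = _ from h]
  | _, _, _ :: _, ⟨rfl, h⟩ => by simp [sum_map_sub φ h]

theorem exists_nodup_isWalk {P : A → Prop} {x y : V}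
    (h : Relation.ReflTransGen (fun x y => ∃ a, P a ∧ tail a = x ∧ head a = y) x y) :
    ∃ L, IsWalk tail head x y L ∧ (∀ a ∈ L, P a) ∧ L.Nodup := by
  induction h using Relation.ReflTransGen.head_induction_on with
  | refl => exact ⟨[], rfl, by simp, List.nodup_nil⟩
  | head hstep _ ih =>
    obtain ⟨a, ha, rfl, rfl⟩ := hstep
    obtain ⟨L, hL, hP, hnd⟩ := ih
    by_cases haL : a ∈ L
    · -- a shortcut: restart the walk at the later occurrence of `a`
      obtain ⟨L₁, L₂, rfl⟩ := List.append_of_mem haL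
      exact ⟨a :: L₂, hL.cons_of_append, fun b hb => hP b (by simp_all),
        hnd.sublist (List.sublist_append_right _ _)⟩
    · exact ⟨a :: L, ⟨rfl, hL⟩, by simp_all, List.nodup_cons.2 ⟨haL, hnd⟩⟩

end Walk

section NetOutflow

variable {V E : Type*} [Fintype E] (esrc edst : E → V)

theorem netOutflow_eq_sum (f : E → ℝ) (v : V) :
    netOutflow esrc edst f v =
      ∑ e, f e * ((if esrc e = v then 1 else 0) - (if edst e = v then 1 else 0)) := by
  simp only [netOutflow, sum_filter, mul_sub, mul_ite, mul_one, mul_zero, sum_sub_distrib]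

theorem netOutflow_add (f g : E → ℝ) (v : V) :
    netOutflow esrc edst (f + g) v = netOutflow esrc edst f v + netOutflow esrc edst g v := by
  simp only [netOutflow, Pi.add_apply, sum_add_distrib]
  ring

theorem netOutflow_sum_elim (h : E ⊕ E → ℝ) (v : V) :
    netOutflow (Sum.elim esrc edst) (Sum.elim edst esrc) h v =
      netOutflow esrc edst (fun e => h (.inl e) - h (.inr e)) v := by
  simp only [netOutflow_eq_sum, Fintype.sum_sum_type, Sum.elim_inl, Sum.elim_inr,
    ← sum_add_distrib]
  refine sum_congr rfl fun e _ => ?_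
  by_cases h₁ : esrc e = v <;> by_cases h₂ : edst e = v <;> simp [h₁, h₂, sub_eq_add_neg, add_comm]

variable {esrc edst}

theorem IsWalk.netOutflow_indicator {x y : V} {L : List E} (hL : IsWalk esrc edst x y L)
    (hnd : L.Nodup) (v : V) :
    netOutflow esrc edst (fun e => if e ∈ L then 1 else 0) v =
      (if x = v then 1 else 0) - (if y = v then 1 else 0) := by
  rw [netOutflow_eq_sum, ← hL.sum_map_sub (fun w => if w = v then (1 : ℝ) else 0),
    ← List.sum_toFinset _ hnd]
  simp only [ite_mul, one_mul, zero_mul]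
  rw [← sum_filter]
  exact sum_congr (by ext; simp) fun _ _ => rfl

variable (esrc edst)

theorem sum_netOutflow (f : E → ℝ) (S : Finset V) :
    ∑ v ∈ S, netOutflow esrc edst f v =
      ∑ e ∈ univ.filter (fun e => esrc e ∈ S ∧ edst e ∉ S), f e -
        ∑ e ∈ univ.filter (fun e => edst e ∈ S ∧ esrc e ∉ S), f e := by
  simp only [netOutflow_eq_sum]
  rw [sum_comm, sum_filter, sum_filter, ← sum_sub_distrib]
  refine sum_congr rfl fun e _ => ?_
  rw [← mul_sum, sum_sub_distrib, sum_ite_eq, sum_ite_eq]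
  split_ifs <;> simp_all

end NetOutflow

section Cut

variable {V E : Type*} [Fintype E] (esrc edst : E → V) (u : E → ℕ)

noncomputable def cutCapWithout (R : Set E) (W : Set V) : ℕ :=
  ∑ e ∈ univ.filter (fun e => e ∉ R ∧ esrc e ∈ W ∧ edst e ∉ W), u e

theorem cutCapWithout_coe [DecidableEq E] (R : Finset E) (W : Set V) :
    cutCapWithout esrc edst u ↑R W =
      ∑ e ∈ univ.filter (fun e => e ∉ R ∧ esrc e ∈ W ∧ edst e ∉ W), u e := by
  simp [cutCapWithout]

theorem cast_cutCapWithout (R : Set E) (W : Set V) :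
    (cutCapWithout esrc edst u R W : ℝ) =
      ∑ e ∈ univ.filter (fun e => esrc e ∈ W ∧ edst e ∉ W), if e ∈ R then 0 else (u e : ℝ) := by
  rw [cutCapWithout, Nat.cast_sum, sum_filter, sum_filter]
  exact sum_congr rfl fun e _ => by by_cases he : e ∈ R <;> simp [he]

theorem cutCapWithout_anti {R R' : Set E} (h : R' ⊆ R) (W : Set V) :
    cutCapWithout esrc edst u R W ≤ cutCapWithout esrc edst u R' W :=
  sum_le_sum_of_subset fun e => by simp only [mem_filter]; tauto

theorem cutCapWithout_congr {R R' : Set E} {W : Set V}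
    (h : ∀ e, esrc e ∈ W → edst e ∉ W → (e ∈ R' ↔ e ∈ R)) :
    cutCapWithout esrc edst u R' W = cutCapWithout esrc edst u R W :=
  sum_congr (filter_congr fun e _ => by grind) fun _ _ => rfl

variable [Fintype V] {esrc edst u} {s t : V} {R : Set E} {W : Set V}

theorem netOutflow_eq_sum_out_sub_sum_in {f : E → ℝ}
    (hcons : ∀ v, v ≠ s → v ≠ t → netOutflow esrc edst f v = 0) (hs : s ∈ W) (ht : t ∉ W) :
    netOutflow esrc edst f s =
      ∑ e ∈ univ.filter (fun e => esrc e ∈ W ∧ edst e ∉ W), f e -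
        ∑ e ∈ univ.filter (fun e => edst e ∈ W ∧ esrc e ∉ W), f e := by
  have hsum := sum_netOutflow esrc edst f (univ.filter (· ∈ W))
  rw [sum_eq_single_of_mem s (by simpa using hs)
    fun v hv hvs => hcons v hvs fun hvt => ht (hvt ▸ (mem_filter.1 hv).2)] at hsum
  simpa using hsum

theorem IsFlowWithout.netOutflow_le_cutCapWithout {f : E → ℝ}
    (hf : IsFlowWithout esrc edst u s t R f) (hs : s ∈ W) (ht : t ∉ W) :
    netOutflow esrc edst f s ≤ cutCapWithout esrc edst u R W := by
  obtain ⟨hbound, hR, hcons, -⟩ := hf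
  rw [netOutflow_eq_sum_out_sub_sum_in hcons hs ht, cast_cutCapWithout]
  have hout : ∑ e ∈ univ.filter (fun e => esrc e ∈ W ∧ edst e ∉ W), f e ≤
      ∑ e ∈ univ.filter (fun e => esrc e ∈ W ∧ edst e ∉ W), if e ∈ R then 0 else (u e : ℝ) :=
    sum_le_sum fun e _ => by
      split_ifs with he
      · exact (hR e he).le
      · exact (hbound e).2
  have hin : 0 ≤ ∑ e ∈ univ.filter (fun e => edst e ∈ W ∧ esrc e ∉ W), f e :=
    sum_nonneg fun e _ => (hbound e).1
  linarith

theorem IsFlowWithout.netOutflow_eq_cutCapWithout {f : E → ℝ}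
    (hf : IsFlowWithout esrc edst u s t R f) (hs : s ∈ W) (ht : t ∉ W)
    (hout : ∀ e ∉ R, esrc e ∈ W → edst e ∉ W → f e = u e)
    (hin : ∀ e, edst e ∈ W → esrc e ∉ W → f e = 0) :
    netOutflow esrc edst f s = cutCapWithout esrc edst u R W := by
  have hzero : ∑ e ∈ univ.filter (fun e => edst e ∈ W ∧ esrc e ∉ W), f e = 0 :=
    sum_eq_zero fun e he => hin e (mem_filter.1 he).2.1 (mem_filter.1 he).2.2
  rw [netOutflow_eq_sum_out_sub_sum_in hf.2.2.1 hs ht, hzero, sub_zero, cast_cutCapWithout]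
  refine sum_congr rfl fun e he => ?_
  obtain ⟨hsrc, hdst⟩ := (mem_filter.1 he).2
  split_ifs with heR
  · exact hf.2.1 e heR
  · exact hout e heR hsrc hdst

end Cut

section Augment

variable {V E : Type*} [Fintype E] {esrc edst : E → V} {u : E → ℕ} {s t : V} {R : Set E}

/-- Arcs of the residual network of an integral flow `f` in `G ∖ R`: `.inl e` runs along `e`,
`.inr e` against it (tails `Sum.elim esrc edst`, heads `Sum.elim edst esrc`). -/
def IsResidualArc (u : E → ℕ) (R : Set E) (f : E → ℤ) : E ⊕ E → Prop :=
  Sum.elim (fun e => e ∉ R ∧ f e < u e) (fun e => 0 < f e)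

noncomputable def augmentAlong (f : E → ℤ) (L : List (E ⊕ E)) (e : E) : ℤ :=
  f e + (if .inl e ∈ L then 1 else 0) - (if .inr e ∈ L then 1 else 0)

theorem netOutflow_augment {f : E → ℤ} {L : List (E ⊕ E)} {x y : V}
    (hL : IsWalk (Sum.elim esrc edst) (Sum.elim edst esrc) x y L) (hnd : L.Nodup) (v : V) :
    netOutflow esrc edst (fun e => (augmentAlong f L e : ℝ)) v =
      netOutflow esrc edst (fun e => (f e : ℝ)) v +
        ((if x = v then 1 else 0) - (if y = v then 1 else 0)) := by
  have hsplit : (fun e => (augmentAlong f L e : ℝ)) = (fun e => (f e : ℝ)) +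
      fun e => (if .inl e ∈ L then 1 else 0) - (if .inr e ∈ L then 1 else 0) := by
    ext e
    simp only [augmentAlong, Pi.add_apply]
    push_cast
    ring
  rw [hsplit, netOutflow_add, ← hL.netOutflow_indicator hnd, netOutflow_sum_elim]
  -- the two indicators differ only in their `Decidable` instances
  congr!

theorem IsFlowWithout.augment {f : E → ℤ} {L : List (E ⊕ E)}
    (hf : IsFlowWithout esrc edst u s t R fun e => (f e : ℝ)) (hst : s ≠ t)
    (hL : IsWalk (Sum.elim esrc edst) (Sum.elim edst esrc) s t L) (hnd : L.Nodup)
    (hres : ∀ a ∈ L, IsResidualArc u R f a) :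
    IsFlowWithout esrc edst u s t R (fun e => (augmentAlong f L e : ℝ)) ∧
      netOutflow esrc edst (fun e => (augmentAlong f L e : ℝ)) s =
        netOutflow esrc edst (fun e => (f e : ℝ)) s + 1 := by
  obtain ⟨hbound, hR, hcons, hval⟩ := hf
  have hvalue := netOutflow_augment (f := f) hL hnd s
  simp only [if_neg hst.symm, if_true, sub_zero] at hvalue
  have hfwd (e : E) (h : .inl e ∈ L) : e ∉ R ∧ f e < u e := by
    simpa [IsResidualArc] using hres _ h
  have hbwd (e : E) (h : .inr e ∈ L) : 0 < f e := by
    simpa [IsResidualArc] using hres _ h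
  refine ⟨⟨fun e => ?_, fun e he => ?_, fun v hvs hvt => ?_, by linarith⟩, hvalue⟩
  · have h₀ : 0 ≤ f e := by exact_mod_cast (show (0 : ℝ) ≤ f e from (hbound e).1)
    have h₁ : f e ≤ u e := by exact_mod_cast (show (f e : ℝ) ≤ u e from (hbound e).2)
    have : 0 ≤ augmentAlong f L e ∧ augmentAlong f L e ≤ u e := by
      unfold augmentAlong
      split_ifs with h₂ h₃ h₃ <;> grind
    dsimp only
    exact ⟨by exact_mod_cast this.1, by exact_mod_cast this.2⟩
  · have h₀ : f e = 0 := by exact_mod_cast (show (f e : ℝ) = 0 from hR e he)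
    have h₁ : .inl e ∉ L := fun h => (hfwd e h).1 he
    have h₂ : .inr e ∉ L := fun h => (hbwd e h).ne' h₀
    simp [augmentAlong, h₀, h₁, h₂]
  · rw [netOutflow_augment hL hnd, hcons v hvs hvt, if_neg (Ne.symm hvs), if_neg (Ne.symm hvt)]
    simp

variable [Fintype V]

theorem IsFlowWithout.exists_value_add_one {f : E → ℤ}
    (hf : IsFlowWithout esrc edst u s t R fun e => (f e : ℝ)) (hst : s ≠ t)
    (hlt : ∀ W : Set V, s ∈ W → t ∉ W →
      netOutflow esrc edst (fun e => (f e : ℝ)) s < cutCapWithout esrc edst u R W) :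
    ∃ g : E → ℤ, (IsFlowWithout esrc edst u s t R fun e => (g e : ℝ)) ∧
      netOutflow esrc edst (fun e => (g e : ℝ)) s =
        netOutflow esrc edst (fun e => (f e : ℝ)) s + 1 := by
  set reach := Relation.ReflTransGen (fun x y => ∃ a, IsResidualArc u R f a ∧
    Sum.elim esrc edst a = x ∧ Sum.elim edst esrc a = y) s
  by_cases ht : reach t
  · obtain ⟨L, hL, hres, hnd⟩ := exists_nodup_isWalk ht
    exact ⟨augmentAlong f L, hf.augment hst hL hnd hres⟩
  -- otherwise the residual-reachable set is a cut that `f` saturates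
  refine absurd (hf.netOutflow_eq_cutCapWithout (W := {v | reach v}) .refl ht ?_ ?_)
    (hlt _ .refl ht).ne
  · intro e heR hsrc hdst
    have hnlt : ¬ f e < u e := fun h => hdst (.tail hsrc ⟨.inl e, ⟨heR, h⟩, rfl, rfl⟩)
    have hle : f e ≤ u e := by exact_mod_cast (show (f e : ℝ) ≤ u e from (hf.1 e).2)
    exact_mod_cast le_antisymm hle (not_lt.1 hnlt)
  · intro e hdst hsrc
    have hnpos : ¬ 0 < f e := fun h => hsrc (.tail hdst ⟨.inr e, h, rfl, rfl⟩)
    have hnonneg : 0 ≤ f e := by exact_mod_cast (show (0 : ℝ) ≤ f e from (hf.1 e).1)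
    exact_mod_cast le_antisymm (not_lt.1 hnpos) hnonneg

theorem exists_intFlow_of_le_cutCapWithout (hst : s ≠ t) {C : ℕ}
    (hC : ∀ W : Set V, s ∈ W → t ∉ W → C ≤ cutCapWithout esrc edst u R W) :
    ∃ f : E → ℤ, (IsFlowWithout esrc edst u s t R fun e => (f e : ℝ)) ∧
      netOutflow esrc edst (fun e => (f e : ℝ)) s = C := by
  suffices ∀ n ≤ C, ∃ f : E → ℤ, (IsFlowWithout esrc edst u s t R fun e => (f e : ℝ)) ∧
      netOutflow esrc edst (fun e => (f e : ℝ)) s = n from this C le_rfl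
  intro n hn
  induction n with
  | zero => exact ⟨0, by simp [IsFlowWithout, netOutflow], by simp [netOutflow]⟩
  | succ n ih =>
    obtain ⟨f, hf, hval⟩ := ih (by omega)
    have hlt (W : Set V) (hs : s ∈ W) (ht : t ∉ W) :
        netOutflow esrc edst (fun e => (f e : ℝ)) s < cutCapWithout esrc edst u R W := by
      rw [hval]
      exact_mod_cast Nat.lt_of_succ_le (hn.trans (hC W hs ht))
    obtain ⟨g, hg, hgval⟩ := hf.exists_value_add_one hst hlt
    exact ⟨g, hg, by rw [hgval, hval]; push_cast; ring⟩

end Augment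

section MinCut

variable {V E : Type*} [Fintype E] (esrc edst : E → V) (u : E → ℕ) (s t : V)

structure IsMinCutWithout (R : Set E) (W : Set V) : Prop where
  source_mem : s ∈ W
  sink_not_mem : t ∉ W
  le_cutCap : ∀ W' : Set V, s ∈ W' → t ∉ W' →
    cutCapWithout esrc edst u R W ≤ cutCapWithout esrc edst u R W'

variable {esrc edst u s t} {R R' : Set E} {W : Set V}

theorem IsMinCutWithout.maxFlowWithout_eq [Fintype V] (h : IsMinCutWithout esrc edst u s t R W) :
    maxFlowWithout esrc edst u s t R = cutCapWithout esrc edst u R W := by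
  obtain ⟨f, hf, hval⟩ := exists_intFlow_of_le_cutCapWithout
    (ne_of_mem_of_not_mem h.source_mem h.sink_not_mem) h.le_cutCap
  refine IsGreatest.csSup_eq ⟨⟨_, hf, hval.symm⟩, ?_⟩
  rintro _ ⟨g, hg, rfl⟩
  exact hg.netOutflow_le_cutCapWithout h.source_mem h.sink_not_mem

theorem IsMinCutWithout.of_subset (h : IsMinCutWithout esrc edst u s t R W) (hR' : R' ⊆ R)
    (hcut : ∀ e ∈ R, esrc e ∈ W → edst e ∉ W → e ∈ R') :
    IsMinCutWithout esrc edst u s t R' W where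
  source_mem := h.source_mem
  sink_not_mem := h.sink_not_mem
  le_cutCap W' hs ht := by
    rw [cutCapWithout_congr esrc edst u fun e hsrc hdst => ⟨(hR' ·), (hcut e · hsrc hdst)⟩]
    exact (h.le_cutCap W' hs ht).trans (cutCapWithout_anti esrc edst u hR' W')

theorem IsMinCutWithout.maxFlowWithout_eq_of_subset [Fintype V]
    (h : IsMinCutWithout esrc edst u s t R W) (hR' : R' ⊆ R)
    (hcut : ∀ e ∈ R, esrc e ∈ W → edst e ∉ W → e ∈ R') :
    maxFlowWithout esrc edst u s t R' = maxFlowWithout esrc edst u s t R := by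
  rw [(h.of_subset hR' hcut).maxFlowWithout_eq, h.maxFlowWithout_eq,
    cutCapWithout_congr esrc edst u fun e hsrc hdst => ⟨(hR' ·), (hcut e · hsrc hdst)⟩]

end MinCut

theorem statement6_general {V E : Type*} [Fintype V] [Fintype E] [DecidableEq E]
    (esrc edst : E → V) (u : E → ℕ) (s t : V)
    (R : Finset E) (VR : Set V) (hsVR : s ∈ VR) (htVR : t ∉ VR)
    (hmin : ∀ W : Set V, s ∈ W → t ∉ W →
      (∑ e ∈ Finset.univ.filter (fun e => e ∉ R ∧ esrc e ∈ VR ∧ edst e ∉ VR), u e) ≤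
        ∑ e ∈ Finset.univ.filter (fun e => e ∉ R ∧ esrc e ∈ W ∧ edst e ∉ W), u e) :
    (maxFlowWithout esrc edst u s t ↑R =
        ((∑ e ∈ Finset.univ.filter (fun e => e ∉ R ∧ esrc e ∈ VR ∧ edst e ∉ VR), u e :
          ℕ) : ℝ)) ∧
    (maxFlowWithout esrc edst u s t ↑R =
        ((∑ e ∈ Finset.univ.filter (fun e => esrc e ∈ VR ∧ edst e ∉ VR), u e : ℕ) : ℝ) -
          ((∑ e ∈ R.filter (fun e => esrc e ∈ VR ∧ edst e ∉ VR), u e : ℕ) : ℝ)) ∧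
    (maxFlowWithout esrc edst u s t ↑(R.filter (fun e => esrc e ∈ VR ∧ edst e ∉ VR)) =
        maxFlowWithout esrc edst u s t ↑R) ∧
    (∀ (c : E → ℕ∞) (B : ℕ),
      (∑ e ∈ R, c e) ≤ (B : ℕ∞) →
      (∀ R' : Finset E, (∑ e ∈ R', c e) ≤ (B : ℕ∞) →
        maxFlowWithout esrc edst u s t ↑R ≤ maxFlowWithout esrc edst u s t ↑R') →
      (∀ e ∈ R, ¬ ((∑ e' ∈ R.erase e, c e') ≤ (B : ℕ∞) ∧
        ∀ R' : Finset E, (∑ e' ∈ R', c e') ≤ (B : ℕ∞) →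
          maxFlowWithout esrc edst u s t ↑(R.erase e) ≤
            maxFlowWithout esrc edst u s t ↑R')) →
      ∀ e ∈ R, esrc e ∈ VR ∧ edst e ∉ VR) := by
  have hVR : IsMinCutWithout esrc edst u s t ↑R VR :=
    ⟨hsVR, htVR, by simpa only [cutCapWithout_coe] using hmin⟩
  have hmax : maxFlowWithout esrc edst u s t ↑R =
      ((∑ e ∈ univ.filter (fun e => e ∉ R ∧ esrc e ∈ VR ∧ edst e ∉ VR), u e : ℕ) : ℝ) := by
    rw [hVR.maxFlowWithout_eq, cutCapWithout_coe]
  have hsplit : ∑ e ∈ univ.filter (fun e => esrc e ∈ VR ∧ edst e ∉ VR), u e =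
      ∑ e ∈ R.filter (fun e => esrc e ∈ VR ∧ edst e ∉ VR), u e +
        ∑ e ∈ univ.filter (fun e => e ∉ R ∧ esrc e ∈ VR ∧ edst e ∉ VR), u e := by
    rw [← sum_filter_add_sum_filter_not _ (· ∈ R), filter_filter, filter_filter]
    congr 2 <;> ext <;> simp only [mem_filter, mem_univ, true_and] <;> tauto
  refine ⟨hmax, by rw [hmax, hsplit]; push_cast; ring, ?_, ?_⟩
  · exact hVR.maxFlowWithout_eq_of_subset (coe_subset.2 (filter_subset _ R))
      fun e he hsrc hdst => mem_filter.2 ⟨he, hsrc, hdst⟩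
  · intro c B hbudget hopt hminimal e he
    by_contra hcut
    refine hminimal e he
      ⟨(sum_le_sum_of_subset (erase_subset e R)).trans hbudget, fun R' hR' => ?_⟩
    rw [hVR.maxFlowWithout_eq_of_subset (coe_subset.2 (erase_subset e R))
      fun e' he' hsrc hdst => mem_erase.2 ⟨fun h => hcut (h ▸ ⟨hsrc, hdst⟩), he'⟩]
    exact hopt R' hR'

/-- Let `[V_R, V ∖ V_R]` be a minimum `s`-`t` cut of `G ∖ R`.  Then
(i) `ν^max(G ∖ R) = Σ_{e ∈ ω⁺(V_R) ∖ R} u(e) = ν([V_R, V ∖ V_R]) − Σ_{e ∈ R ∩ ω⁺(V_R)} u(e)`;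
(ii) `ν^max(G ∖ (R ∩ ω⁺(V_R))) = ν^max(G ∖ R)`; and in particular every minimal optimal
interdiction set `R` satisfies `R ⊆ ω⁺(V_R)`. -/
theorem statement6 {V E : Type*} [Fintype V] [Fintype E] [DecidableEq E]
    (esrc edst : E → V) (u : E → ℕ) (s t : V) (hst : s ≠ t)
    (R : Finset E) (VR : Set V) (hsVR : s ∈ VR) (htVR : t ∉ VR)
    (hmin : ∀ W : Set V, s ∈ W → t ∉ W →
      (∑ e ∈ Finset.univ.filter (fun e => e ∉ R ∧ esrc e ∈ VR ∧ edst e ∉ VR), u e) ≤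
        ∑ e ∈ Finset.univ.filter (fun e => e ∉ R ∧ esrc e ∈ W ∧ edst e ∉ W), u e) :
    (maxFlowWithout esrc edst u s t ↑R =
        ((∑ e ∈ Finset.univ.filter (fun e => e ∉ R ∧ esrc e ∈ VR ∧ edst e ∉ VR), u e :
          ℕ) : ℝ)) ∧
    (maxFlowWithout esrc edst u s t ↑R =
        ((∑ e ∈ Finset.univ.filter (fun e => esrc e ∈ VR ∧ edst e ∉ VR), u e : ℕ) : ℝ) -
          ((∑ e ∈ R.filter (fun e => esrc e ∈ VR ∧ edst e ∉ VR), u e : ℕ) : ℝ)) ∧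
    (maxFlowWithout esrc edst u s t ↑(R.filter (fun e => esrc e ∈ VR ∧ edst e ∉ VR)) =
        maxFlowWithout esrc edst u s t ↑R) ∧
    (∀ (c : E → ℕ∞) (B : ℕ),
      (∑ e ∈ R, c e) ≤ (B : ℕ∞) →
      (∀ R' : Finset E, (∑ e ∈ R', c e) ≤ (B : ℕ∞) →
        maxFlowWithout esrc edst u s t ↑R ≤ maxFlowWithout esrc edst u s t ↑R') →
      (∀ e ∈ R, ¬ ((∑ e' ∈ R.erase e, c e') ≤ (B : ℕ∞) ∧
        ∀ R' : Finset E, (∑ e' ∈ R', c e') ≤ (B : ℕ∞) →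
          maxFlowWithout esrc edst u s t ↑(R.erase e) ≤
            maxFlowWithout esrc edst u s t ↑R')) →
      ∀ e ∈ R, esrc e ∈ VR ∧ edst e ∉ VR) :=
  statement6_general esrc edst u s t R VR hsVR htVR hmin
end

section
/- Let H be a finite directed multigraph, p a function assigning an integer to each arc such that every circuit C of H satisfies p(C) ∈ {−1, 0, 1}, λ a nonnegative integer length on each arc, c a cost in ℕ ∪ {∞} on each arc, and B ∈ ℕ a budget. For a (closed) walk W traversing arcs e₁, …, e_m, define the reduced length λ_B(W) = min { Σ_{j ∉ I} λ(e_j) : I ⊆ {1, …, m}, Σ_{j ∈ I} c(e_j) ≤ B }. Then the minimum of λ_B(W) over all closed walks W in H with p(W) = 1 equals the minimum of λ_B(C) over all circuits C in H with p(C) = 1, provided a circuit with p-value 1 exists; moreover, any optimal closed walk W with p(W) = 1 contains a circuit C (among the circuits into which the arc multiset of W partitions) with p(C) = 1 and λ_B(C) = λ_B(W). -/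
/-- A closed walk in the directed multigraph with arcs `E` (tails `esrc`, heads `edst`),
encoded as a cyclic sequence of `n + 1` arcs: the head of each arc is the tail of the
next one (cyclically). -/
def IsClosedWalk {V E : Type*} (esrc edst : E → V) {n : ℕ} (w : Fin (n + 1) → E) : Prop :=
  ∀ i, edst (w i) = esrc (w (i + 1))

/-- A circuit is a closed walk visiting no vertex more than once. -/
def IsCircuit {V E : Type*} (esrc edst : E → V) {n : ℕ} (w : Fin (n + 1) → E) : Prop :=
  IsClosedWalk esrc edst w ∧ Function.Injective fun i => esrc (w i)

/-- The reduced length `λ_B(w)` of a walk `w` with respect to the budget `B`: the minimum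
total `λ`-length of the arc occurrences of `w` remaining after removing a set of arc
occurrences of total cost at most `B`. -/
noncomputable def reducedLength {E : Type*} (lam : E → ℕ) (c : E → ℕ∞) (B : ℕ)
    {n : ℕ} (w : Fin (n + 1) → E) : ℕ :=
  sInf {x : ℕ | ∃ I : Finset (Fin (n + 1)),
    (∑ j ∈ I, c (w j)) ≤ (B : ℕ∞) ∧ x = ∑ j ∈ Iᶜ, lam (w j)}

lemma redSet_nonempty {E : Type*} (lam : E → ℕ) (c : E → ℕ∞) (B : ℕ)
    {n : ℕ} (w : Fin (n + 1) → E) :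
    {x : ℕ | ∃ I : Finset (Fin (n + 1)),
      (∑ j ∈ I, c (w j)) ≤ (B : ℕ∞) ∧ x = ∑ j ∈ Iᶜ, lam (w j)}.Nonempty :=
  ⟨∑ j ∈ (∅ : Finset (Fin (n+1)))ᶜ, lam (w j), ∅, by simp, rfl⟩

lemma reducedLength_comp_le {E : Type*} (lam : E → ℕ) (c : E → ℕ∞) (B : ℕ)
    {n m : ℕ} (w : Fin (n + 1) → E) (f : Fin (m + 1) → Fin (n + 1))
    (hf : Function.Injective f) :
    reducedLength lam c B (w ∘ f) ≤ reducedLength lam c B w := by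
  obtain ⟨I, hI, hx⟩ := Nat.sInf_mem (redSet_nonempty lam c B w)
  set fe : Fin (m+1) ↪ Fin (n+1) := ⟨f, hf⟩ with hfe
  set J : Finset (Fin (m+1)) := Finset.univ.filter (fun j => f j ∈ I) with hJ
  have hJc : (∑ j ∈ J, c ((w ∘ f) j)) ≤ (B : ℕ∞) := by
    refine le_trans ?_ hI
    rw [show (∑ j ∈ J, c ((w ∘ f) j)) = ∑ i ∈ J.map fe, c (w i) from
      (Finset.sum_map J fe (fun i => c (w i))).symm]
    refine Finset.sum_le_sum_of_subset ?_
    intro i hi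
    obtain ⟨j, hj, rfl⟩ := Finset.mem_map.mp hi
    exact (Finset.mem_filter.mp hj).2
  have hJl : (∑ j ∈ Jᶜ, lam ((w ∘ f) j)) ≤ ∑ j ∈ Iᶜ, lam (w j) := by
    rw [show (∑ j ∈ Jᶜ, lam ((w ∘ f) j)) = ∑ i ∈ Jᶜ.map fe, lam (w i) from
      (Finset.sum_map Jᶜ fe (fun i => lam (w i))).symm]
    refine Finset.sum_le_sum_of_subset ?_
    intro i hi
    obtain ⟨j, hj, rfl⟩ := Finset.mem_map.mp hi
    simp only [Finset.mem_compl, hJ, Finset.mem_filter, Finset.mem_univ, true_and] at hj ⊢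
    exact hj
  calc reducedLength lam c B (w ∘ f) ≤ ∑ j ∈ Jᶜ, lam ((w ∘ f) j) :=
        Nat.sInf_le ⟨J, hJc, rfl⟩
    _ ≤ ∑ j ∈ Iᶜ, lam (w j) := hJl
    _ = reducedLength lam c B w := hx.symm

lemma map_univ_comp_le {E : Type*} [Fintype E] {n m : ℕ}
    (w : Fin (n + 1) → E) (f : Fin (m + 1) → Fin (n + 1)) (hf : Function.Injective f) :
    Finset.univ.val.map (w ∘ f) ≤ Finset.univ.val.map w := by
  have h1 : Finset.univ.val.map (w ∘ f) = (Finset.univ.val.map f).map w := by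
    rw [Multiset.map_map]
  have h2 : (Finset.univ.image f).val = Multiset.map f Finset.univ.val := by
    rw [Finset.image_val, Multiset.dedup_eq_self]
    exact Multiset.Nodup.map hf Finset.univ.nodup
  rw [h1, ← h2]
  exact Multiset.map_le_map (Finset.val_le_iff.mpr (Finset.subset_univ _))

lemma key {V E : Type*} (esrc edst : E → V) (p : E → ℤ)
    (hcirc : ∀ (m : ℕ) (C : Fin (m + 1) → E), IsCircuit esrc edst C →
      (∑ i, p (C i)) ∈ ({-1, 0, 1} : Set ℤ)) :
    ∀ n (w : Fin (n + 1) → E), IsClosedWalk esrc edst w → 1 ≤ ∑ i, p (w i) →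
      ∃ (m : ℕ) (C : Fin (m + 1) → E) (f : Fin (m + 1) → Fin (n + 1)),
        IsCircuit esrc edst C ∧ (∑ i, p (C i)) = 1 ∧ Function.Injective f ∧ C = w ∘ f := by
  intro n
  induction n using Nat.strong_induction_on with
  | _ n IH =>
  intro w hw hp
  by_cases hinj : Function.Injective fun i => esrc (w i)
  · refine ⟨n, w, id, ⟨hw, hinj⟩, ?_, Function.injective_id, rfl⟩
    have h := hcirc n w ⟨hw, hinj⟩
    simp only [Set.mem_insert_iff, Set.mem_singleton_iff] at h
    rcases h with h | h | h <;> omega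
  · rw [Function.not_injective_iff] at hinj
    obtain ⟨a, b, hab, hne⟩ := hinj
    set w' : Fin (n + 1) → E := fun k => w (a + k) with hw'def
    have hw'walk : IsClosedWalk esrc edst w' := by
      intro k
      have h := hw (a + k)
      rwa [add_assoc] at h
    set d : ℕ := (b - a).val with hd
    have hd1 : 1 ≤ d := by
      rcases Nat.eq_zero_or_pos d with h | h
      · exact absurd (sub_eq_zero.mp (Fin.ext h : b - a = 0)).symm hne
      · exact h
    have hdn : d ≤ n := Nat.lt_succ_iff.mp (b - a).isLt
    have hsrc : esrc (w' 0) = esrc (w' ⟨d, by omega⟩) := by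
      have h0 : w' 0 = w a := by simp [hw'def]
      have h1 : w' ⟨d, by omega⟩ = w b := by
        have h2 : (⟨d, by omega⟩ : Fin (n + 1)) = b - a := Fin.ext rfl
        rw [hw'def]
        simp only [h2]
        congr 1
        abel
      rw [h0, h1]; exact hab
    obtain ⟨d₁, hd₁⟩ : ∃ k, d = k + 1 := ⟨d - 1, by omega⟩
    obtain ⟨d₂, hd₂⟩ : ∃ k, n + 1 - d = k + 1 := ⟨n - d, by omega⟩
    set g₁ : Fin (d₁ + 1) → Fin (n + 1) := fun k => ⟨k.val, by omega⟩ with hg₁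
    set g₂ : Fin (d₂ + 1) → Fin (n + 1) := fun k => ⟨d + k.val, by omega⟩ with hg₂
    set w₁ : Fin (d₁ + 1) → E := w' ∘ g₁ with hw₁def
    set w₂ : Fin (d₂ + 1) → E := w' ∘ g₂ with hw₂def
    have hg₁inj : Function.Injective g₁ := by
      intro x y h
      have h2 := congrArg Fin.val h
      exact Fin.ext h2
    have hg₂inj : Function.Injective g₂ := by
      intro x y h
      have h2 : d + x.val = d + y.val := congrArg Fin.val h
      exact Fin.ext (by omega)
    have hw₁walk : IsClosedWalk esrc edst w₁ := by
      intro k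
      rcases Nat.lt_or_ge k.val d₁ with hk | hk
      · have h := hw'walk (g₁ k)
        have heq : g₁ k + 1 = g₁ (k + 1) := by
          apply Fin.ext
          have h1 : (g₁ k + 1).val = (g₁ k).val + 1 :=
            Fin.val_add_one_of_lt (by rw [Fin.lt_def, Fin.val_last]; show k.val < n; omega)
          have h2 : (k + 1).val = k.val + 1 :=
            Fin.val_add_one_of_lt (by rw [Fin.lt_def, Fin.val_last]; omega)
          rw [h1]
          show (g₁ k).val + 1 = (k + 1).val
          rw [h2]
        rwa [heq] at h
      · have hk' : k.val = d₁ := by omega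
        have h := hw'walk (g₁ k)
        have heq : g₁ k + 1 = (⟨d, by omega⟩ : Fin (n + 1)) := by
          apply Fin.ext
          have h1 : (g₁ k + 1).val = (g₁ k).val + 1 :=
            Fin.val_add_one_of_lt (by rw [Fin.lt_def, Fin.val_last]; show k.val < n; omega)
          rw [h1]
          show k.val + 1 = d
          omega
        rw [heq] at h
        have heq2 : w₁ (k + 1) = w' 0 := by
          have hk2 : k + 1 = (0 : Fin (d₁ + 1)) := by
            have : k = Fin.last d₁ := Fin.ext (by rw [Fin.val_last]; exact hk')
            rw [this]
            exact Fin.last_add_one d₁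
          rw [hk2, hw₁def, Function.comp_apply]
          congr 1
        rw [heq2, hsrc]
        exact h
    have hw₂walk : IsClosedWalk esrc edst w₂ := by
      intro k
      rcases Nat.lt_or_ge k.val d₂ with hk | hk
      · have h := hw'walk (g₂ k)
        have heq : g₂ k + 1 = g₂ (k + 1) := by
          apply Fin.ext
          have h1 : (g₂ k + 1).val = (g₂ k).val + 1 :=
            Fin.val_add_one_of_lt
              (by rw [Fin.lt_def, Fin.val_last]; show d + k.val < n; omega)
          have h2 : (k + 1).val = k.val + 1 :=
            Fin.val_add_one_of_lt (by rw [Fin.lt_def, Fin.val_last]; omega)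
          rw [h1]
          show d + k.val + 1 = d + (k + 1).val
          rw [h2]
          omega
        rwa [heq] at h
      · have hk' : k.val = d₂ := by omega
        have h := hw'walk (g₂ k)
        have heq : g₂ k + 1 = (0 : Fin (n + 1)) := by
          have hlast : g₂ k = Fin.last n := by
            apply Fin.ext
            rw [Fin.val_last]
            show d + k.val = n
            omega
          rw [hlast]
          exact Fin.last_add_one n
        rw [heq] at h
        have heq2 : w₂ (k + 1) = w' ⟨d, by omega⟩ := by
          have hk2 : k + 1 = (0 : Fin (d₂ + 1)) := by
            have : k = Fin.last d₂ := Fin.ext (by rw [Fin.val_last]; exact hk')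
            rw [this]
            exact Fin.last_add_one d₂
          rw [hk2, hw₂def, Function.comp_apply]
          congr 1
        rw [heq2, ← hsrc]
        exact h
    have hrot : ∑ i, p (w' i) = ∑ i, p (w i) := by
      rw [hw'def]
      exact Equiv.sum_comp (Equiv.addLeft a) (fun i => p (w i))
    have hsz : (d₁ + 1) + (d₂ + 1) = n + 1 := by omega
    have hsplit : ∑ i, p (w' i) = (∑ k, p (w₁ k)) + ∑ k, p (w₂ k) := by
      have e₁ : ∑ k : Fin (d₁ + 1), p (w' (Fin.cast hsz (Fin.castAdd (d₂ + 1) k)))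
          = ∑ k, p (w₁ k) := by
        apply Finset.sum_congr rfl
        intro k _
        have hidx : Fin.cast hsz (Fin.castAdd (d₂ + 1) k) = g₁ k := Fin.ext rfl
        rw [hidx, hw₁def, Function.comp_apply]
      have e₂ : ∑ k : Fin (d₂ + 1), p (w' (Fin.cast hsz (Fin.natAdd (d₁ + 1) k)))
          = ∑ k, p (w₂ k) := by
        apply Finset.sum_congr rfl
        intro k _
        have hidx : Fin.cast hsz (Fin.natAdd (d₁ + 1) k) = g₂ k := by
          apply Fin.ext
          show d₁ + 1 + k.val = d + k.val
          omega
        rw [hidx, hw₂def, Function.comp_apply]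
      rw [← Fin.sum_congr' (fun i => p (w' i)) hsz, Fin.sum_univ_add, e₁, e₂]
    have hcases : 1 ≤ ∑ k, p (w₁ k) ∨ 1 ≤ ∑ k, p (w₂ k) := by
      rw [hrot] at hsplit
      omega
    rcases hcases with hc | hc
    · obtain ⟨m, C, f, hC, hC1, hfinj, hCeq⟩ := IH d₁ (by omega) w₁ hw₁walk hc
      refine ⟨m, C, fun k => a + g₁ (f k), hC, hC1, ?_, ?_⟩
      · intro x y h
        exact hfinj (hg₁inj (add_left_cancel h))
      · funext k
        rw [hCeq]
        rfl
    · obtain ⟨m, C, f, hC, hC1, hfinj, hCeq⟩ := IH d₂ (by omega) w₂ hw₂walk hc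
      refine ⟨m, C, fun k => a + g₂ (f k), hC, hC1, ?_, ?_⟩
      · intro x y h
        exact hfinj (hg₂inj (add_left_cancel h))
      · funext k
        rw [hCeq]
        rfl

/-- If every circuit has `p`-value in `{-1, 0, 1}` and some circuit has `p`-value `1`,
then the minimum reduced length over closed walks of `p`-value `1` equals the minimum
reduced length over circuits of `p`-value `1`; moreover every optimal closed walk of
`p`-value `1` contains (as a submultiset of its arcs) a circuit of `p`-value `1` with
the same reduced length. -/
theorem statement8 {V E : Type*} [Fintype V] [Fintype E] (esrc edst : E → V)
    (p : E → ℤ) (lam : E → ℕ) (c : E → ℕ∞) (B : ℕ)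
    (hcirc : ∀ (m : ℕ) (C : Fin (m + 1) → E), IsCircuit esrc edst C →
      (∑ i, p (C i)) ∈ ({-1, 0, 1} : Set ℤ))
    (hex : ∃ (m : ℕ) (C : Fin (m + 1) → E), IsCircuit esrc edst C ∧ (∑ i, p (C i)) = 1) :
    sInf {x : ℕ | ∃ (n : ℕ) (w : Fin (n + 1) → E), IsClosedWalk esrc edst w ∧
        (∑ i, p (w i)) = 1 ∧ x = reducedLength lam c B w}
      = sInf {x : ℕ | ∃ (n : ℕ) (w : Fin (n + 1) → E), IsCircuit esrc edst w ∧
          (∑ i, p (w i)) = 1 ∧ x = reducedLength lam c B w} ∧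
    ∀ (n : ℕ) (w : Fin (n + 1) → E), IsClosedWalk esrc edst w → (∑ i, p (w i)) = 1 →
      reducedLength lam c B w
        = sInf {x : ℕ | ∃ (n' : ℕ) (w' : Fin (n' + 1) → E), IsClosedWalk esrc edst w' ∧
            (∑ i, p (w' i)) = 1 ∧ x = reducedLength lam c B w'} →
      ∃ (m : ℕ) (C : Fin (m + 1) → E), IsCircuit esrc edst C ∧ (∑ i, p (C i)) = 1 ∧
        reducedLength lam c B C = reducedLength lam c B w ∧
        Finset.univ.val.map C ≤ Finset.univ.val.map w := by
  classical
  set A : Set ℕ := {x : ℕ | ∃ (n : ℕ) (w : Fin (n + 1) → E), IsClosedWalk esrc edst w ∧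
      (∑ i, p (w i)) = 1 ∧ x = reducedLength lam c B w} with hA
  set Cs : Set ℕ := {x : ℕ | ∃ (n : ℕ) (w : Fin (n + 1) → E), IsCircuit esrc edst w ∧
      (∑ i, p (w i)) = 1 ∧ x = reducedLength lam c B w} with hCs
  obtain ⟨m₀, C₀, hC₀, hC₀1⟩ := hex
  have hCne : Cs.Nonempty := ⟨reducedLength lam c B C₀, m₀, C₀, hC₀, hC₀1, rfl⟩
  have hAne : A.Nonempty := ⟨reducedLength lam c B C₀, m₀, C₀, hC₀.1, hC₀1, rfl⟩
  have hsub : Cs ⊆ A := by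
    rintro x ⟨n, w, hw, h1, rfl⟩
    exact ⟨n, w, hw.1, h1, rfl⟩
  have hle1 : sInf A ≤ sInf Cs := Nat.sInf_le (hsub (Nat.sInf_mem hCne))
  have hle2 : sInf Cs ≤ sInf A := by
    obtain ⟨n, w, hw, h1, hx⟩ := Nat.sInf_mem hAne
    obtain ⟨m, C, f, hC, hC1, hfinj, hCeq⟩ := key esrc edst p hcirc n w hw (by omega)
    have h3 : reducedLength lam c B C ≤ reducedLength lam c B w := by
      rw [hCeq]; exact reducedLength_comp_le lam c B w f hfinj
    calc sInf Cs ≤ reducedLength lam c B C := Nat.sInf_le ⟨m, C, hC, hC1, rfl⟩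
      _ ≤ reducedLength lam c B w := h3
      _ = sInf A := hx.symm
  refine ⟨le_antisymm hle1 hle2, ?_⟩
  intro n w hw h1 hopt
  obtain ⟨m, C, f, hC, hC1, hfinj, hCeq⟩ := key esrc edst p hcirc n w hw (by omega)
  have h3 : reducedLength lam c B C ≤ reducedLength lam c B w := by
    rw [hCeq]; exact reducedLength_comp_le lam c B w f hfinj
  have h4 : reducedLength lam c B w ≤ reducedLength lam c B C := by
    rw [hopt]
    exact Nat.sInf_le ⟨m, C, hC.1, hC1, rfl⟩
  refine ⟨m, C, hC, hC1, le_antisymm h3 h4, ?_⟩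
  rw [hCeq]
  exact map_univ_comp_le w f hfinj
end

section
/- Let H = (V*, E*) be a finite directed multigraph with arc lengths λ : E* → ℕ, arc costs c : E* → ℕ ∪ {∞}, and arc parities p : E* → {−1, 0, 1}; let B ∈ ℕ and L ∈ ℕ. Define the layered graph G' with vertex set { v_{b,q} : v ∈ V*, 0 ≤ b ≤ B, −L ≤ q ≤ L } and the following arcs: (a) budget arcs (v_{b,q}, v_{b−1,q}) of length 0 for all b ≥ 1; (b) for each arc e = (u, v) ∈ E*, 'keep' arcs (u_{b,q}, v_{b, q + p(e)}) of length λ(e) whenever q + p(e) ∈ [−L, L]; (c) for each arc e = (u, v) ∈ E* with c(e) ≤ b, 'remove' arcs (u_{b,q}, v_{b − c(e), q + p(e)}) of length 0 whenever q + p(e) ∈ [−L, L]. For a path W' in G' from u_{b₁,q₁} to v_{b₂,q₂}, let η(W') be the walk in H obtained by projecting the keep and remove arcs to their underlying arcs of E* (budget arcs are dropped), and let R(W') be the set of arcs of E* underlying the remove arcs of W'. Then η(W') is a walk in H from u to v with total parity p(η(W')) = q₂ − q₁, the total cost of R(W') is at most b₁ − b₂, and the reduced length satisfies λ_{b₁−b₂}(η(W'))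 ≤ λ'(W'), where λ'(W') is the total length of W' in G'. -/
open scoped Classical

/-- The arcs of the layered graph `G'` over the directed multigraph with arcs `E` and
vertices `V`: budget arcs (indexed by a vertex together with a budget level and a parity
level), 'keep' arcs and 'remove' arcs (each indexed by an arc of `E` together with a
budget level and a parity level). -/
abbrev LArc (V E : Type*) := (V × ℕ × ℤ) ⊕ ((E × ℕ × ℤ) ⊕ (E × ℕ × ℤ))

/-- Tail of an arc of the layered graph, as an element of `V × ℕ × ℤ`. -/
def lsrc {V E : Type*} (esrc : E → V) : LArc V E → V × ℕ × ℤ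
  | Sum.inl (v, b, q) => (v, b, q)
  | Sum.inr (Sum.inl (e, b, q)) => (esrc e, b, q)
  | Sum.inr (Sum.inr (e, b, q)) => (esrc e, b, q)

/-- Head of an arc of the layered graph: budget arcs go down one budget level; keep arcs
change the parity level by `p e`; remove arcs moreover decrease the budget by `c e`. -/
def ldst {V E : Type*} (edst : E → V) (p : E → ℤ) (c : E → ℕ∞) : LArc V E → V × ℕ × ℤ
  | Sum.inl (v, b, q) => (v, b - 1, q)
  | Sum.inr (Sum.inl (e, b, q)) => (edst e, b, q + p e)
  | Sum.inr (Sum.inr (e, b, q)) => (edst e, b - (c e).toNat, q + p e)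

/-- Validity of an arc of the layered graph: budget levels lie in `[0, B]` (with `b ≥ 1`
for budget arcs and `c e ≤ b` for remove arcs) and parity levels lie in `[-L, L]`. -/
def LValid {V E : Type*} (p : E → ℤ) (c : E → ℕ∞) (B L : ℕ) : LArc V E → Prop
  | Sum.inl (_, b, q) => 1 ≤ b ∧ b ≤ B ∧ -(L : ℤ) ≤ q ∧ q ≤ (L : ℤ)
  | Sum.inr (Sum.inl (e, b, q)) => b ≤ B ∧ -(L : ℤ) ≤ q ∧ q ≤ (L : ℤ) ∧
      -(L : ℤ) ≤ q + p e ∧ q + p e ≤ (L : ℤ)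
  | Sum.inr (Sum.inr (e, b, q)) => c e ≤ (b : ℕ∞) ∧ b ≤ B ∧ -(L : ℤ) ≤ q ∧ q ≤ (L : ℤ) ∧
      -(L : ℤ) ≤ q + p e ∧ q + p e ≤ (L : ℤ)

/-- The length of an arc of the layered graph: keep arcs have length `λ e`, budget and
remove arcs have length `0`. -/
def llen {V E : Type*} (lam : E → ℕ) : LArc V E → ℕ
  | Sum.inl _ => 0
  | Sum.inr (Sum.inl (e, _, _)) => lam e
  | Sum.inr (Sum.inr _) => 0

/-- The projection `η` on arcs: budget arcs are dropped, keep and remove arcs project to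
their underlying arc of `E`. -/
def lproj {V E : Type*} : LArc V E → Option E
  | Sum.inl _ => none
  | Sum.inr (Sum.inl (e, _, _)) => some e
  | Sum.inr (Sum.inr (e, _, _)) => some e

/-- The underlying arc of a remove arc (`none` for budget and keep arcs). -/
def lremove {V E : Type*} : LArc V E → Option E
  | Sum.inr (Sum.inr (e, _, _)) => some e
  | _ => none

/-- A path in the layered graph `G'` from `x` to `y`: a chained list of valid arcs with
the prescribed endpoints, visiting no vertex twice. -/
def IsLPath {V E : Type*} (esrc edst : E → V) (p : E → ℤ) (c : E → ℕ∞) (B L : ℕ)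
    (x y : V × ℕ × ℤ) (W : List (LArc V E)) : Prop :=
  (∀ a ∈ W, LValid p c B L a) ∧
  W.Chain' (fun a b => ldst edst p c a = lsrc esrc b) ∧
  (W = [] → x = y) ∧
  (∀ a ∈ W.head?, lsrc esrc a = x) ∧
  (∀ a ∈ W.getLast?, ldst edst p c a = y) ∧
  (x :: W.map (ldst edst p c)).Nodup

/-- A walk from `x` to `y` in the directed multigraph with arcs `E`, encoded as a list
of arcs. -/
def IsWalkList {V E : Type*} (esrc edst : E → V) (x y : V) (Lw : List E) : Prop :=
  Lw.Chain' (fun a b => edst a = esrc b) ∧ (Lw = [] → x = y) ∧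
  (∀ a ∈ Lw.head?, esrc a = x) ∧ (∀ a ∈ Lw.getLast?, edst a = y)

/-- The reduced length `λ_b(Lw)` of a walk, given as a list of arcs, with respect to the
budget `b`. -/
noncomputable def redLenList {E : Type*} (lam : E → ℕ) (c : E → ℕ∞) (b : ℕ)
    (Lw : List E) : ℕ :=
  sInf {x : ℕ | ∃ I : Finset (Fin Lw.length),
    (∑ j ∈ I, c (Lw.get j)) ≤ (b : ℕ∞) ∧ x = ∑ j ∈ Iᶜ, lam (Lw.get j)}

/-! Every arc of `G'` shifts the parity level by the parity of its underlying arc of `H` and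
lowers the budget level by at least the cost of the arc it removes, so the parity and cost
claims follow by telescoping along the path. For the reduced length, the positions of `η(W')`
coming from remove arcs form an admissible index set: their total cost is at most `b₁ − b₂`,
and the remaining positions are exactly the keep arcs, whose lengths make up `λ'(W')`. -/

section Walks

variable {α β : Type*} {src dst : α → β}

theorem isWalkList_nil {x y : β} : IsWalkList src dst x y [] ↔ x = y :=
  ⟨fun h => h.2.1 rfl, fun h => ⟨.nil, fun _ => h, by simp, by simp⟩⟩

theorem isWalkList_cons {x y : β} {a : α} {l : List α} :
    IsWalkList src dst x y (a :: l) ↔ src a = x ∧ IsWalkList src dst (dst a) y l := by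
  change List.IsChain _ _ ∧ _ ↔ _ ∧ List.IsChain _ _ ∧ _
  cases l with
  | nil => simp
  | cons b l => simp [List.isChain_cons_cons, and_assoc, and_left_comm, eq_comm]

theorem IsWalkList.eq_sum_add {M : Type*} [AddCommMonoid M] (f : β → M) (g : α → M)
    {x y : β} {l : List α} (h : IsWalkList src dst x y l)
    (hfg : ∀ a ∈ l, f (src a) = g a + f (dst a)) : f x = (l.map g).sum + f y := by
  induction l generalizing x with
  | nil => simp [isWalkList_nil.1 h]
  | cons a l ih =>
    obtain ⟨rfl, ht⟩ := isWalkList_cons.1 h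
    rw [List.map_cons, List.sum_cons, add_assoc, ← ih ht fun b hb => hfg b (.tail _ hb)]
    exact hfg a (.head _)

theorem IsWalkList.filterMap {γ δ : Type*} {src' dst' : γ → δ} (φ : β → δ) (π : α → Option γ)
    (hsome : ∀ a e, π a = some e → src' e = φ (src a) ∧ dst' e = φ (dst a))
    (hnone : ∀ a, π a = none → φ (src a) = φ (dst a))
    {x y : β} {l : List α} (h : IsWalkList src dst x y l) :
    IsWalkList src' dst' (φ x) (φ y) (l.filterMap π) := by
  induction l generalizing x with
  | nil => simp [isWalkList_nil.1 h, isWalkList_nil]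
  | cons a l ih =>
    obtain ⟨rfl, ht⟩ := isWalkList_cons.1 h
    cases hπ : π a with
    | none => rw [List.filterMap_cons_none hπ, hnone a hπ]; exact ih ht
    | some e =>
      obtain ⟨hs, hd⟩ := hsome a e hπ
      rw [List.filterMap_cons_some hπ, isWalkList_cons, hd]
      exact ⟨hs, ih ht⟩

end Walks

theorem List.sum_map_filterMap {α β M : Type*} [AddMonoid M] (f : α → Option β) (g : β → M)
    (l : List α) : ((l.filterMap f).map g).sum = (l.map fun a => ((f a).map g).getD 0).sum := by
  induction l with
  | nil => rfl
  | cons a l ih => cases h : f a <;> simp [h, ih]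

theorem List.sum_toFinset_le_sum_map {ι M : Type*} [DecidableEq ι] [AddCommMonoid M]
    [PartialOrder M] [CanonicallyOrderedAdd M] (f : ι → M) (l : List ι) :
    ∑ i ∈ l.toFinset, f i ≤ (l.map f).sum := by
  rw [Finset.sum_eq_multiset_sum, List.toFinset_val, Multiset.map_coe, Multiset.sum_coe]
  exact ((List.dedup_sublist l).map f).sum_le_sum fun _ _ => zero_le

theorem redLenList_map_fst_le {E : Type*} (lam : E → ℕ) (c : E → ℕ∞) (b : ℕ)
    (P : List (E × Bool)) (hc : (P.map fun x => if x.2 then c x.1 else 0).sum ≤ b) :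
    redLenList lam c b (P.map Prod.fst) ≤ (P.map fun x => if x.2 then 0 else lam x.1).sum := by
  have hlen : (P.map Prod.fst).length = P.length := List.length_map _
  let removed : Finset (Fin (P.map Prod.fst).length) :=
    Finset.univ.filter fun j => (P.get (Fin.cast hlen j)).2
  refine Nat.sInf_le ⟨removed, ?_, ?_⟩
  · rw [← Fin.sum_univ_fun_getElem] at hc
    refine (le_of_eq ?_).trans hc
    rw [Finset.sum_filter]
    exact Fintype.sum_equiv (finCongr hlen) _ _ fun j => by simp
  · rw [← Fin.sum_univ_fun_getElem, Finset.compl_filter, Finset.sum_filter]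
    refine (Fintype.sum_equiv (finCongr hlen) _ _ fun j => ?_).symm
    simp only [finCongr_apply]
    split_ifs <;> simp_all

section LayeredGraph

variable {V E : Type*} {esrc edst : E → V} {p : E → ℤ} {c : E → ℕ∞} {B L : ℕ}

/-- The projection `η` on arcs, with the flag `true` marking the arcs of `R(W')`. -/
def lmark : LArc V E → Option (E × Bool)
  | Sum.inl _ => none
  | Sum.inr (Sum.inl (e, _, _)) => some (e, false)
  | Sum.inr (Sum.inr (e, _, _)) => some (e, true)

def lbudgetDrop (c : E → ℕ∞) : LArc V E → ℕ
  | Sum.inl _ => 1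
  | Sum.inr (Sum.inl _) => 0
  | Sum.inr (Sum.inr (e, _, _)) => (c e).toNat

theorem filterMap_lproj_eq (W : List (LArc V E)) :
    W.filterMap lproj = (W.filterMap lmark).map Prod.fst := by
  rw [List.map_filterMap]
  congr 1
  funext a
  rcases a with _ | _ | _ <;> rfl

theorem sum_llen_eq (lam : E → ℕ) (W : List (LArc V E)) :
    (W.map (llen lam)).sum = ((W.filterMap lmark).map fun x => if x.2 then 0 else lam x.1).sum := by
  rw [List.sum_map_filterMap]
  congr 2
  funext a
  rcases a with _ | _ | _ <;> rfl

theorem sum_lremove_eq (c : E → ℕ∞) (W : List (LArc V E)) :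
    ((W.filterMap lremove).map c).sum
      = ((W.filterMap lmark).map fun x => if x.2 then c x.1 else 0).sum := by
  rw [List.sum_map_filterMap, List.sum_map_filterMap]
  congr 2
  funext a
  rcases a with _ | _ | _ <;> rfl

theorem IsLPath.isWalkList {x y : V × ℕ × ℤ} {W : List (LArc V E)}
    (hW : IsLPath esrc edst p c B L x y W) : IsWalkList (lsrc esrc) (ldst edst p c) x y W :=
  ⟨hW.2.1, hW.2.2.1, hW.2.2.2.1, hW.2.2.2.2.1⟩

theorem IsLPath.isWalkList_filterMap_lproj {x y : V × ℕ × ℤ} {W : List (LArc V E)}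
    (hW : IsLPath esrc edst p c B L x y W) : IsWalkList esrc edst x.1 y.1 (W.filterMap lproj) :=
  hW.isWalkList.filterMap Prod.fst lproj
    (fun a e h => by rcases a with _ | ⟨e', _⟩ | ⟨e', _⟩ <;> cases h <;> exact ⟨rfl, rfl⟩)
    (fun a h => by rcases a with _ | _ | _ <;> first | rfl | cases h)

theorem IsLPath.sum_parity {x y : V × ℕ × ℤ} {W : List (LArc V E)}
    (hW : IsLPath esrc edst p c B L x y W) :
    ((W.filterMap lproj).map p).sum = y.2.2 - x.2.2 := by
  have := hW.isWalkList.eq_sum_add (fun v => -v.2.2) (fun a => ((lproj a).map p).getD 0)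
    (fun a _ => by rcases a with _ | _ | _ <;> simp [lsrc, ldst, lproj])
  rw [List.sum_map_filterMap]
  linarith

theorem lsrc_budget_eq {a : LArc V E} (ha : LValid p c B L a) :
    (lsrc esrc a).2.1 = lbudgetDrop c a + (ldst edst p c a).2.1 := by
  rcases a with ⟨v, b, q⟩ | ⟨e, b, q⟩ | ⟨e, b, q⟩
  · have : 1 ≤ b := ha.1
    simp only [lsrc, ldst, lbudgetDrop]
    omega
  · simp [lsrc, ldst, lbudgetDrop]
  · have : (c e).toNat ≤ b := ENat.toNat_le_of_le_natCast ha.1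
    simp only [lsrc, ldst, lbudgetDrop]
    omega

theorem getD_map_lremove_le {a : LArc V E} (ha : LValid p c B L a) :
    ((lremove a).map c).getD 0 ≤ lbudgetDrop c a := by
  rcases a with _ | _ | ⟨e, b, q⟩
  · exact zero_le
  · exact zero_le
  · exact (ENat.natCast_toNat (ne_top_of_le_ne_top (ENat.natCast_ne_top b) ha.1)).ge

theorem IsLPath.sum_lremove_le {x y : V × ℕ × ℤ} {W : List (LArc V E)}
    (hW : IsLPath esrc edst p c B L x y W) :
    ((W.filterMap lremove).map c).sum ≤ ((x.2.1 - y.2.1 : ℕ) : ℕ∞) := by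
  have hdrop := hW.isWalkList.eq_sum_add (fun v => v.2.1) (lbudgetDrop c)
    fun a ha => lsrc_budget_eq (hW.1 a ha)
  rw [List.sum_map_filterMap, hdrop, Nat.add_sub_cancel, Nat.cast_list_sum, List.map_map]
  exact List.sum_le_sum fun a ha => getD_map_lremove_le (hW.1 a ha)

end LayeredGraph

theorem statement9_general {V E : Type*} [DecidableEq E]
    (esrc edst : E → V) (p : E → ℤ)
    (lam : E → ℕ) (c : E → ℕ∞) (B L : ℕ)
    (u v : V) (b₁ b₂ : ℕ) (q₁ q₂ : ℤ)
    (W : List (LArc V E))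
    (hW : IsLPath esrc edst p c B L (u, b₁, q₁) (v, b₂, q₂) W) :
    IsWalkList esrc edst u v (W.filterMap lproj) ∧
    ((W.filterMap lproj).map p).sum = q₂ - q₁ ∧
    (∑ e ∈ (W.filterMap lremove).toFinset, c e) ≤ (b₁ : ℕ∞) - (b₂ : ℕ∞) ∧
    redLenList lam c (b₁ - b₂) (W.filterMap lproj) ≤ (W.map (llen lam)).sum := by
  have hcost := hW.sum_lremove_le
  refine ⟨hW.isWalkList_filterMap_lproj, hW.sum_parity, ?_, ?_⟩
  · rw [← ENat.natCast_sub]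
    exact (List.sum_toFinset_le_sum_map c _).trans hcost
  · rw [filterMap_lproj_eq, sum_llen_eq]
    exact redLenList_map_fst_le lam c _ _ (sum_lremove_eq c W ▸ hcost)

/-- Projecting a path of the layered graph `G'` from `u_{b₁,q₁}` to `v_{b₂,q₂}` yields a
walk `η(W')` from `u` to `v` in `H` of total parity `q₂ − q₁`; the removed arcs `R(W')`
have total cost at most `b₁ − b₂`, and `λ_{b₁−b₂}(η(W')) ≤ λ'(W')`. -/
theorem statement9 {V E : Type*} [Fintype V] [Fintype E] [DecidableEq E]
    (esrc edst : E → V) (p : E → ℤ) (hp : ∀ e, p e ∈ ({-1, 0, 1} : Set ℤ))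
    (lam : E → ℕ) (c : E → ℕ∞) (B L : ℕ)
    (u v : V) (b₁ b₂ : ℕ) (q₁ q₂ : ℤ)
    (W : List (LArc V E))
    (hW : IsLPath esrc edst p c B L (u, b₁, q₁) (v, b₂, q₂) W) :
    IsWalkList esrc edst u v (W.filterMap lproj) ∧
    ((W.filterMap lproj).map p).sum = q₂ - q₁ ∧
    (∑ e ∈ (W.filterMap lremove).toFinset, c e) ≤ (b₁ : ℕ∞) - (b₂ : ℕ∞) ∧
    redLenList lam c (b₁ - b₂) (W.filterMap lproj) ≤ (W.map (llen lam)).sum :=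
  statement9_general esrc edst p lam c B L u v b₁ b₂ q₁ q₂ W hW
end
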